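/- arXiv:2412.14862 — 7 statements merged into one kernel-verified Lean document; each statement's English description precedes it below -/
import Mathlib

section
/- The structures (ℝ; +, [0,1]) and (ℝ; +, −, (R_r)_{r∈ℕ⁺}) are interdefinable over ∅: for every n ∈ ℕ and every S ⊆ ℝ^n, S is ∅-definable in the L_M-structure ℝ if and only if S is ∅-definable in the L_N-structure ℝ. -/
open FirstOrder

/-- The language `L_M` with one binary function symbol `+` and one unary relation symbol `I`. -/
def LM : FirstOrder.Language where
  Functions n := match n with
    | 2 => Unit
    | _ => Empty
  Relations n := match n with
    | 1 => Unit
    | _ => Empty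

/-- `ℝ` as an `LM`-structure: `+` is interpreted as addition and `I` as the interval `[0,1]`. -/
noncomputable instance realLMStructure : LM.Structure ℝ where
  funMap {n} f x :=
    match n, f with
    | 2, _ => x 0 + x 1
  RelMap {n} r x :=
    match n, r with
    | 1, _ => x 0 ∈ Set.Icc (0 : ℝ) 1

/-- The language `L_N` with a binary function symbol `+`, a unary function symbol `−`, and a
binary relation symbol `R_r` for every positive integer `r`. -/
def LN : FirstOrder.Language where
  Functions n := match n with
    | 1 => Unit
    | 2 => Unit
    | _ => Empty
  Relations n := match n with
    | 2 => ℕ+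
    | _ => Empty

/-- `ℝ` as an `LN`-structure: `+` is addition, `−` is negation, and `R_r(x,y)` holds iff
`0 ≤ y − x ≤ r`. -/
noncomputable instance realLNStructure : LN.Structure ℝ where
  funMap {n} f x :=
    match n, f with
    | 1, _ => -(x 0)
    | 2, _ => x 0 + x 1
  RelMap {n} r x :=
    match n, r with
    | 2, r => 0 ≤ x 1 - x 0 ∧ x 1 - x 0 ≤ ((PNat.val r : ℕ) : ℝ)

section aux
open FirstOrder.Language


section helpers
variable {L : Language} {M : Type*} [L.Structure M]

lemma def_exists {n : ℕ} {s : Set (Fin (n+1) → M)} (h : Set.Definable ∅ L s) :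
    Set.Definable ∅ L {x : Fin n → M | ∃ y, Fin.snoc x y ∈ s} := by
  have h2 := h.image_comp (Fin.castSucc : Fin n → Fin (n+1))
  convert h2 using 1
  ext x
  constructor
  · rintro ⟨y, hy⟩
    exact ⟨Fin.snoc x y, hy, by ext i; simp⟩
  · rintro ⟨g, hg, rfl⟩
    exact ⟨g (Fin.last n), by
      convert hg
      exact Fin.snoc_init_self g⟩

lemma def_forall {n : ℕ} {s : Set (Fin (n+1) → M)} (h : Set.Definable ∅ L s) :
    Set.Definable ∅ L {x : Fin n → M | ∀ y, Fin.snoc x y ∈ s} := by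
  have h2 := (def_exists h.compl).compl
  convert h2 using 1
  ext x
  simp [not_exists]
end helpers

def mplus {α : Type*} (t u : LM.Term α) : LM.Term α :=
  Term.func (l := 2) () ![t, u]

@[simp] lemma realize_mplus {α : Type*} (w : α → ℝ) (t u : LM.Term α) :
    (mplus t u).realize w = t.realize w + u.realize w := by
  simp only [mplus, Term.realize_func]
  show (fun i => Term.realize w (![t, u] i)) 0 + (fun i => Term.realize w (![t, u] i)) 1 = _
  simp

def lsum {α : Type*} (l : List α) (t : LM.Term α) : LM.Term α :=
  l.foldl (fun s i => mplus s (Term.var i)) t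

lemma realize_lsum {α : Type*} (w : α → ℝ) (l : List α) (t : LM.Term α) :
    (lsum l t).realize w = t.realize w + (l.map w).sum := by
  induction l generalizing t with
  | nil => simp [lsum]
  | cons a l ih =>
    show (lsum l (mplus t (Term.var a))).realize w = _
    rw [ih]
    simp [add_assoc]

def clist {k : ℕ} (c : Fin k → ℕ) : List (Fin k) :=
  (List.finRange k).flatMap fun i => List.replicate (c i) i

lemma sum_clist {k : ℕ} (c : Fin k → ℕ) (x : Fin k → ℝ) :
    ((clist c).map x).sum = ∑ i, (c i : ℝ) * x i := by
  rw [clist, List.map_flatMap, List.flatMap, List.sum_flatten, Fin.sum_univ_def,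
    List.map_map]
  congr 1
  ext i
  simp [Function.comp, List.map_replicate, List.sum_replicate, nsmul_eq_mul]

lemma eqA {k : ℕ} (c d : Fin k → ℕ) :
    Set.Definable ∅ LM {x : Fin k → ℝ | ∑ i, (c i : ℝ) * x i = ∑ i, (d i : ℝ) * x i} := by
  rw [Set.empty_definable_iff]
  refine ⟨BoundedFormula.all (Term.bdEqual
    (lsum ((clist c).map Sum.inl) (Term.var (Sum.inr 0)))
    (lsum ((clist d).map Sum.inl) (Term.var (Sum.inr 0)))), ?_⟩
  ext x
  simp only [Set.mem_setOf_eq, Formula.Realize, BoundedFormula.realize_all,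
    BoundedFormula.realize_bdEqual, realize_lsum, Term.realize_var, List.map_map,
    Sum.elim_comp_inl, sum_clist, Sum.elim_inr]
  exact ⟨fun h _ => by rw [h], fun h => add_left_cancel (h 0)⟩

lemma iccSet {k : ℕ} (j : Fin k) :
    Set.Definable ∅ LM {x : Fin k → ℝ | x j ∈ Set.Icc (0:ℝ) 1} := by
  rw [Set.empty_definable_iff]
  refine ⟨BoundedFormula.rel (l := 1) () ![Term.var (Sum.inl j)], ?_⟩
  ext x
  simp only [Set.mem_setOf_eq, Formula.Realize, BoundedFormula.realize_rel]
  exact Iff.rfl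

lemma split_real (A B : ℝ) (r : ℕ) :
    (B ≤ A ∧ A ≤ B + ((r : ℝ) + 1)) ↔
      ∃ y : ℝ, (0 ≤ y ∧ y ≤ 1) ∧ (B + y ≤ A ∧ A ≤ B + y + r) := by
  have hr : (0:ℝ) ≤ r := Nat.cast_nonneg r
  constructor
  · rintro ⟨h1, h2⟩
    refine ⟨min (A - B) 1, ⟨le_min (by linarith) zero_le_one, min_le_right _ _⟩, ?_, ?_⟩
    · have := min_le_left (A - B) 1; linarith
    · rcases le_total (A - B) 1 with h | h
      · rw [min_eq_left h]; linarith
      · rw [min_eq_right h]; linarith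
  · rintro ⟨y, ⟨h0, h1⟩, h2, h3⟩
    constructor <;> linarith

lemma sum_snoc_coef {k : ℕ} (c : Fin k → ℕ) (a : ℕ) (x : Fin k → ℝ) (y : ℝ) :
    ∑ i : Fin (k+1), (((Fin.snoc c a : Fin (k+1) → ℕ) i : ℕ) : ℝ) * ((Fin.snoc x y : Fin (k+1) → ℝ) i)
      = (∑ i, (c i : ℝ) * x i) + a * y := by
  rw [Fin.sum_univ_castSucc]
  simp

lemma leB {k : ℕ} (r : ℕ) (c d : Fin k → ℕ) :
    Set.Definable ∅ LM {x : Fin k → ℝ |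
      ∑ i, (d i : ℝ) * x i ≤ ∑ i, (c i : ℝ) * x i ∧
      ∑ i, (c i : ℝ) * x i ≤ (∑ i, (d i : ℝ) * x i) + r} := by
  induction r generalizing k c d with
  | zero =>
    convert eqA c d using 1
    ext x
    simp only [Set.mem_setOf_eq, Nat.cast_zero, add_zero]
    exact ⟨fun h => le_antisymm h.2 h.1, fun h => ⟨h.ge, h.le⟩⟩
  | succ r ih =>
    have hB := (iccSet (Fin.last k)).inter (ih (Fin.snoc c 0) (Fin.snoc d 1))
    have hE := def_exists hB
    convert hE using 1
    ext x
    simp only [Set.mem_setOf_eq, Set.mem_inter_iff, Set.mem_Icc, Fin.snoc_last,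
      sum_snoc_coef, Nat.cast_succ, Nat.cast_zero, Nat.cast_one, zero_mul, one_mul, add_zero, zero_add]
    exact split_real _ _ r

lemma LN_term_coeffs {n : ℕ} (t : LN.Term (Empty ⊕ Fin n)) :
    ∃ c : Fin n → ℤ, ∀ x : Fin n → ℝ,
      t.realize (Sum.elim (fun e => e.elim) x) = ∑ i, (c i : ℝ) * x i := by
  induction t with
  | var a =>
    rcases a with e | i
    · exact e.elim
    · refine ⟨Pi.single i 1, fun x => ?_⟩
      simp [Pi.single_apply, ite_mul, Finset.sum_ite_eq']
  | @func l f ts ih =>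
    match l, f with
    | 1, f =>
      obtain ⟨c, hc⟩ := ih 0
      refine ⟨-c, fun x => ?_⟩
      have h0 : ∀ v : Fin 1 → ℝ, Structure.funMap (L := LN) (M := ℝ) f v = -(v 0) := fun _ => rfl
      simp only [Term.realize_func, h0, hc]
      simp [Finset.sum_neg_distrib]
    | 2, f =>
      obtain ⟨c, hc⟩ := ih 0
      obtain ⟨d, hd⟩ := ih 1
      refine ⟨c + d, fun x => ?_⟩
      have h0 : ∀ v : Fin 2 → ℝ, Structure.funMap (L := LN) (M := ℝ) f v = v 0 + v 1 :=
        fun _ => rfl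
      simp only [Term.realize_func, h0, hc, hd, ← Finset.sum_add_distrib]
      refine Finset.sum_congr rfl fun i _ => ?_
      simp only [Pi.add_apply]
      push_cast
      ring

lemma cast_toNat_sub (z : ℤ) : ((z.toNat : ℝ)) - (((-z).toNat : ℝ)) = (z : ℝ) := by
  rcases le_total 0 z with h | h
  · lift z to ℕ using h
    simp
  · have h1 : z.toNat = 0 := Int.toNat_eq_zero.mpr h
    have h2 : ((-z).toNat : ℤ) = -z := Int.toNat_of_nonneg (by linarith)
    have h3 : ((-z).toNat : ℝ) = -(z : ℝ) := by exact_mod_cast congrArg (Int.cast : ℤ → ℝ) h2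
    rw [h1, h3]
    push_cast
    ring

lemma key_sum {n : ℕ} (e : Fin n → ℤ) (x : Fin n → ℝ) :
    (∑ i, ((fun j => (e j).toNat) i : ℝ) * x i) - ∑ i, ((fun j => (-(e j)).toNat) i : ℝ) * x i
      = ∑ i, (e i : ℝ) * x i := by
  rw [← Finset.sum_sub_distrib]
  refine Finset.sum_congr rfl fun i _ => ?_
  rw [← sub_mul, cast_toNat_sub]

lemma LN_atomic_equal {n : ℕ} (t₁ t₂ : LN.Term (Empty ⊕ Fin n)) :
    Set.Definable ∅ LM {x : Fin n → ℝ |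
      t₁.realize (Sum.elim (fun e => e.elim) x) = t₂.realize (Sum.elim (fun e => e.elim) x)} := by
  obtain ⟨a, ha⟩ := LN_term_coeffs t₁
  obtain ⟨b, hb⟩ := LN_term_coeffs t₂
  convert eqA (fun j => (a j - b j).toNat) (fun j => (-(a j - b j)).toNat) using 1
  ext x
  simp only [Set.mem_setOf_eq, ha, hb]
  have h := key_sum (fun j => a j - b j) x
  have h2 : ∑ i, ((a i - b i : ℤ) : ℝ) * x i
      = (∑ i, (a i : ℝ) * x i) - ∑ i, (b i : ℝ) * x i := by
    rw [← Finset.sum_sub_distrib]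
    refine Finset.sum_congr rfl fun i _ => ?_
    push_cast; ring
  constructor <;> intro hh <;> simp only at h ⊢ <;> linarith [h, h2]

lemma LN_atomic_rel {n : ℕ} (r : ℕ+) (ts : Fin 2 → LN.Term (Empty ⊕ Fin n)) :
    Set.Definable ∅ LM {x : Fin n → ℝ |
      0 ≤ (ts 1).realize (Sum.elim (fun e => e.elim) x)
          - (ts 0).realize (Sum.elim (fun e => e.elim) x) ∧
        (ts 1).realize (Sum.elim (fun e => e.elim) x)
          - (ts 0).realize (Sum.elim (fun e => e.elim) x) ≤ ((r : ℕ) : ℝ)} := by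
  obtain ⟨a, ha⟩ := LN_term_coeffs (ts 0)
  obtain ⟨b, hb⟩ := LN_term_coeffs (ts 1)
  convert leB (r : ℕ) (fun j => (b j - a j).toNat) (fun j => (-(b j - a j)).toNat) using 1
  ext x
  simp only [Set.mem_setOf_eq, ha, hb]
  have h := key_sum (fun j => b j - a j) x
  have h2 : ∑ i, ((b i - a i : ℤ) : ℝ) * x i
      = (∑ i, (b i : ℝ) * x i) - ∑ i, (a i : ℝ) * x i := by
    rw [← Finset.sum_sub_distrib]
    refine Finset.sum_congr rfl fun i _ => ?_
    push_cast; ring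
  simp only at h
  constructor <;> rintro ⟨h3, h4⟩ <;> constructor <;> linarith [h, h2]

lemma LN_to_LM {m : ℕ} (φ : LN.BoundedFormula Empty m) :
    Set.Definable ∅ LM {x : Fin m → ℝ | φ.Realize (fun e => e.elim) x} := by
  induction φ with
  | falsum =>
    convert Set.definable_empty (A := (∅ : Set ℝ)) (L := LM)
    rfl
  | equal t₁ t₂ =>
    convert LN_atomic_equal t₁ t₂ using 1
    rfl
  | @rel _ l R ts =>
    match l, R with
    | 2, R =>
      convert LN_atomic_rel R ts using 1
      ext x; exact Iff.rfl
  | imp φ ψ ihφ ihψ =>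
    convert ihφ.compl.union ihψ using 1
    ext x
    simp only [Set.mem_setOf_eq, BoundedFormula.realize_imp, Set.mem_union, Set.mem_compl_iff,
      Set.mem_setOf_eq, imp_iff_not_or]
  | all φ ih =>
    convert def_forall ih using 1
    ext x; exact Iff.rfl

lemma dir_NM {n : ℕ} {S : Set (Fin n → ℝ)} (h : Set.Definable ∅ LN S) :
    Set.Definable ∅ LM S := by
  rw [Set.empty_definable_iff] at h
  obtain ⟨φ, rfl⟩ := h
  have h2 := LN_to_LM (BoundedFormula.relabel Sum.inr φ)
  convert h2 using 1
  rfl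
  ext x
  exact (Formula.realize_relabel_sumInr φ).symm

def tmap {α : Type*} : LM.Term α → LN.Term α
  | Term.var a => Term.var a
  | @Term.func _ _ l f ts =>
    match l, f with
    | 2, _ => Term.func (l := 2) (() : LN.Functions 2) fun i => tmap (ts i)

lemma realize_tmap {α : Type*} (w : α → ℝ) : ∀ t : LM.Term α, (tmap t).realize w = t.realize w
  | Term.var a => rfl
  | @Term.func _ _ l f ts => by
    match l, f with
    | 2, f =>
      have hN : ∀ v : Fin 2 → ℝ, Structure.funMap (L := LN) (M := ℝ) (n := 2) (() : LN.Functions 2) v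
          = v 0 + v 1 := fun _ => rfl
      have hM : ∀ v : Fin 2 → ℝ, Structure.funMap (L := LM) (M := ℝ) f v
          = v 0 + v 1 := fun _ => rfl
      simp only [tmap, Term.realize_func, hN, hM, realize_tmap]
      exact (hN _).trans (by simp only [realize_tmap])

def nplus {α : Type*} (t u : LN.Term α) : LN.Term α :=
  Term.func (l := 2) () ![t, u]

def nneg {α : Type*} (t : LN.Term α) : LN.Term α :=
  Term.func (l := 1) () ![t]

@[simp] lemma realize_nplus {α : Type*} (w : α → ℝ) (t u : LN.Term α) :
    (nplus t u).realize w = t.realize w + u.realize w := by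
  simp only [nplus, Term.realize_func]
  show (fun i => Term.realize w (![t, u] i)) 0 + (fun i => Term.realize w (![t, u] i)) 1 = _
  simp

@[simp] lemma realize_nneg {α : Type*} (w : α → ℝ) (t : LN.Term α) :
    (nneg t).realize w = -(t.realize w) := by
  simp only [nneg, Term.realize_func]
  show -(fun i => Term.realize w (![t] i)) 0 = _
  simp

lemma comp_g {m k : ℕ} (x : Fin m → ℝ) (u : Fin k → ℝ) :
    (Sum.elim x u) ∘ (Sum.elim (fun e => e.elim) Sum.inl : Empty ⊕ Fin m → Fin m ⊕ Fin k)
      = Sum.elim (fun e => e.elim) x := by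
  funext a
  rcases a with e | i
  · exact e.elim
  · rfl

lemma LM_atomic_equal {m : ℕ} (t₁ t₂ : LM.Term (Empty ⊕ Fin m)) :
    Set.Definable ∅ LN {x : Fin m → ℝ |
      t₁.realize (Sum.elim (fun e => e.elim) x) = t₂.realize (Sum.elim (fun e => e.elim) x)} := by
  rw [Set.empty_definable_iff]
  refine ⟨Term.bdEqual ((tmap t₁).relabel (Sum.elim (fun e => e.elim) Sum.inl))
    ((tmap t₂).relabel (Sum.elim (fun e => e.elim) Sum.inl)), ?_⟩
  ext x
  simp only [Set.mem_setOf_eq, Formula.Realize, BoundedFormula.realize_bdEqual,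
    Term.realize_relabel, realize_tmap, comp_g]

def relOne : LN.Relations 2 := (1 : ℕ+)

lemma LM_atomic_rel {m : ℕ} (t : LM.Term (Empty ⊕ Fin m)) :
    Set.Definable ∅ LN {x : Fin m → ℝ |
      t.realize (Sum.elim (fun e => e.elim) x) ∈ Set.Icc (0:ℝ) 1} := by
  rw [Set.empty_definable_iff]
  refine ⟨BoundedFormula.all (Relations.boundedFormula (n := 2) relOne
    ![nplus (Term.var (Sum.inr 0)) (nneg (Term.var (Sum.inr 0))),
      (tmap t).relabel (Sum.elim (fun e => e.elim) Sum.inl)]), ?_⟩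
  ext x
  have hR : ∀ v : Fin 2 → ℝ, Structure.RelMap (L := LN) (M := ℝ) (n := 2) relOne v ↔
      (0 ≤ v 1 - v 0 ∧ v 1 - v 0 ≤ (((1:ℕ+) : ℕ) : ℝ)) := fun _ => Iff.rfl
  simp only [Set.mem_setOf_eq, Formula.Realize, BoundedFormula.realize_all,
    BoundedFormula.realize_rel, hR, Matrix.cons_val_one, Matrix.cons_val_zero, Matrix.head_cons,
    realize_nplus, realize_nneg, Term.realize_var, Term.realize_relabel, realize_tmap, comp_g,
    Sum.elim_inr, PNat.one_coe, Nat.cast_one, add_neg_cancel, sub_zero, Set.mem_Icc]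
  exact ⟨fun h _ => h, fun h => h 0⟩

lemma LM_to_LN {m : ℕ} (φ : LM.BoundedFormula Empty m) :
    Set.Definable ∅ LN {x : Fin m → ℝ | φ.Realize (fun e => e.elim) x} := by
  induction φ with
  | falsum => convert Set.definable_empty (A := (∅ : Set ℝ)) (L := LN); rfl
  | equal t₁ t₂ => convert LM_atomic_equal t₁ t₂ using 1; rfl
  | @rel _ l R ts =>
    match l, R with
    | 1, R => convert LM_atomic_rel (ts 0) using 1; ext x; exact Iff.rfl
  | imp φ ψ ihφ ihψ =>
    convert ihφ.compl.union ihψ using 1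
    ext x
    simp only [Set.mem_setOf_eq, BoundedFormula.realize_imp, Set.mem_union, Set.mem_compl_iff,
      Set.mem_setOf_eq, imp_iff_not_or]
  | all φ ih => convert def_forall ih using 1; ext x; exact Iff.rfl

lemma dir_MN {n : ℕ} {S : Set (Fin n → ℝ)} (h : Set.Definable ∅ LM S) :
    Set.Definable ∅ LN S := by
  rw [Set.empty_definable_iff] at h
  obtain ⟨φ, rfl⟩ := h
  have h2 := LM_to_LN (BoundedFormula.relabel Sum.inr φ)
  convert h2 using 1
  rfl
  ext x
  exact (Formula.realize_relabel_sumInr φ).symm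

end aux

/-- The structures `(ℝ; +, [0,1])` and `(ℝ; +, −, (R_r)_{r∈ℕ⁺})` are interdefinable over `∅`:
for every `n` and every `S ⊆ ℝⁿ`, `S` is `∅`-definable in the `L_M`-structure `ℝ` iff it is
`∅`-definable in the `L_N`-structure `ℝ`. -/
theorem statement1 (n : ℕ) (S : Set (Fin n → ℝ)) :
    Set.Definable (∅ : Set ℝ) LM S ↔ Set.Definable (∅ : Set ℝ) LN S := by
  exact ⟨dir_MN, dir_NM⟩
end

section
/- The theory of (ℝ; +, [0,1]) is unstable: there exist an L_M-formula φ(x,y) in two free variables and sequences (a_i)_{i∈ℕ}, (b_i)_{i∈ℕ} of real numbers such that for all i, j ∈ ℕ, ℝ ⊨ φ(a_i, b_j) if and only if i < j. -/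
open FirstOrder

/-- The formula `I(x + y)`. -/
noncomputable def myphi : LM.Formula (Fin 2) :=
  Language.Relations.formula₁ (Unit.unit : LM.Relations 1)
    (Language.Functions.apply₂ (Unit.unit : LM.Functions 2)
      (Language.Term.var 0) (Language.Term.var 1))

/-- The theory of `(ℝ; +, [0,1])` is unstable: some `L_M`-formula `φ(x,y)` has the order
property, i.e. there are sequences `(a_i)`, `(b_i)` of reals with `ℝ ⊨ φ(a_i, b_j) ↔ i < j`. -/
theorem statement3 :
    ∃ (φ : LM.Formula (Fin 2)) (a b : ℕ → ℝ),
      ∀ i j : ℕ, φ.Realize ![a i, b j] ↔ i < j := by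
  refine ⟨myphi, fun i => 1 - (2⁻¹ : ℝ)^i, fun j => 2 * (2⁻¹ : ℝ)^j, fun i j => ?_⟩
  have h : myphi.Realize ![1 - (2⁻¹:ℝ)^i, 2 * (2⁻¹:ℝ)^j] ↔
      (1 - (2⁻¹:ℝ)^i) + 2 * (2⁻¹:ℝ)^j ∈ Set.Icc (0:ℝ) 1 := by
    simp [myphi, Language.Relations.formula₁, Language.Relations.boundedFormula₁,
      Language.Relations.boundedFormula,
      Language.BoundedFormula.Realize, Language.Functions.apply₂,
      Language.Structure.RelMap, Language.Structure.funMap, Language.Formula.Realize,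
      Language.Relations.formula, Language.Term.realize]
  rw [h]
  have hi : (0:ℝ) < (2⁻¹:ℝ)^i := by positivity
  have hj : (0:ℝ) < (2⁻¹:ℝ)^j := by positivity
  have hi1 : (2⁻¹:ℝ)^i ≤ 1 := pow_le_one₀ (by norm_num) (by norm_num)
  constructor
  · rintro ⟨-, h1⟩
    have : 2 * (2⁻¹:ℝ)^j ≤ (2⁻¹:ℝ)^i := by linarith
    have h2 : (2⁻¹:ℝ)^(j) < (2⁻¹:ℝ)^i := lt_of_lt_of_le (by linarith) this
    have := pow_lt_pow_iff_right_of_lt_one₀ (by norm_num : (0:ℝ) < 2⁻¹) (by norm_num : (2⁻¹:ℝ) < 1) |>.mp h2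
    omega
  · intro hij
    have key : 2 * (2⁻¹:ℝ)^j ≤ (2⁻¹:ℝ)^i := by
      have : (2⁻¹:ℝ)^j ≤ (2⁻¹:ℝ)^(i+1) :=
        pow_le_pow_of_le_one (by norm_num) (by norm_num) (by omega)
      have e : (2⁻¹:ℝ)^(i+1) = 2⁻¹ * (2⁻¹:ℝ)^i := by ring
      rw [e] at this; linarith
    exact ⟨by linarith, by linarith⟩
end

section
/- Every subgroup H of the additive group (ℝ, +) such that H, as a subset of ℝ, is definable with parameters in the structure (ℝ; +, [0,1]), satisfies H = {0} or H = ℝ. -/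
open FirstOrder

namespace SLaux

/-- An affine form with real coefficients on coordinates indexed by `ι`. -/
structure Lin (ι : Type) where
  a : ι → ℝ
  c : ℝ

variable {ι κ : Type} [Fintype ι] [Fintype κ]

noncomputable def Lin.eval (ℓ : Lin ι) (x : ι → ℝ) : ℝ := (∑ i, ℓ.a i * x i) + ℓ.c

noncomputable def Lin.add (ℓ m : Lin ι) : Lin ι := ⟨fun i => ℓ.a i + m.a i, ℓ.c + m.c⟩
noncomputable def Lin.smul (r : ℝ) (ℓ : Lin ι) : Lin ι := ⟨fun i => r * ℓ.a i, r * ℓ.c⟩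
noncomputable def Lin.neg (ℓ : Lin ι) : Lin ι := Lin.smul (-1) ℓ
noncomputable def Lin.sub (ℓ m : Lin ι) : Lin ι := ℓ.add m.neg
noncomputable def Lin.const (c : ℝ) : Lin ι := ⟨fun _ => 0, c⟩

@[simp] lemma Lin.eval_add (ℓ m : Lin ι) (x : ι → ℝ) :
    (ℓ.add m).eval x = ℓ.eval x + m.eval x := by
  simp only [Lin.eval, Lin.add, add_mul, Finset.sum_add_distrib]; ring

@[simp] lemma Lin.eval_smul (r : ℝ) (ℓ : Lin ι) (x : ι → ℝ) :
    (Lin.smul r ℓ).eval x = r * ℓ.eval x := by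
  simp only [Lin.eval, Lin.smul, mul_assoc, ← Finset.mul_sum]; ring

@[simp] lemma Lin.eval_neg (ℓ : Lin ι) (x : ι → ℝ) : ℓ.neg.eval x = - ℓ.eval x := by
  simp [Lin.neg]

@[simp] lemma Lin.eval_sub (ℓ m : Lin ι) (x : ι → ℝ) :
    (ℓ.sub m).eval x = ℓ.eval x - m.eval x := by
  simp [Lin.sub]; ring

@[simp] lemma Lin.eval_const (c : ℝ) (x : ι → ℝ) : (Lin.const c : Lin ι).eval x = c := by
  simp [Lin.eval, Lin.const]

/-- A basic semilinear datum: a list of equalities and a list of strict inequalities. -/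
abbrev BasicData (ι : Type) := List (Lin ι) × List (Lin ι)

def Holds (b : BasicData ι) (x : ι → ℝ) : Prop :=
  (∀ ℓ ∈ b.1, ℓ.eval x = 0) ∧ ∀ ℓ ∈ b.2, ℓ.eval x < 0

/-- A set is semilinear if it is a finite union of basic sets. -/
def Semilinear (S : Set (ι → ℝ)) : Prop :=
  ∃ B : List (BasicData ι), S = {x | ∃ b ∈ B, Holds b x}

lemma semilinear_congr {S T : Set (ι → ℝ)} (h : S = T) : Semilinear S ↔ Semilinear T := by rw [h]

lemma semilinear_empty : Semilinear (∅ : Set (ι → ℝ)) := ⟨[], by ext x; simp⟩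

lemma semilinear_basic (b : BasicData ι) : Semilinear {x | Holds b x} := ⟨[b], by ext x; simp⟩

lemma semilinear_eq0 (ℓ : Lin ι) : Semilinear {x | ℓ.eval x = 0} := by
  have := semilinear_basic (ι := ι) ([ℓ], [])
  simpa [Holds] using this

lemma semilinear_lt0 (ℓ : Lin ι) : Semilinear {x | ℓ.eval x < 0} := by
  have := semilinear_basic (ι := ι) ([], [ℓ])
  simpa [Holds] using this

lemma Semilinear.union {S T : Set (ι → ℝ)} (hS : Semilinear S) (hT : Semilinear T) :
    Semilinear (S ∪ T) := by
  obtain ⟨B₁, rfl⟩ := hS; obtain ⟨B₂, rfl⟩ := hT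
  refine ⟨B₁ ++ B₂, ?_⟩
  ext x
  simp only [Set.mem_union, Set.mem_setOf_eq, List.mem_append]
  constructor
  · rintro (⟨b, hb, h⟩ | ⟨b, hb, h⟩) <;> exact ⟨b, by tauto, h⟩
  · rintro ⟨b, hb | hb, h⟩
    · exact Or.inl ⟨b, hb, h⟩
    · exact Or.inr ⟨b, hb, h⟩

lemma Holds.append (b₁ b₂ : BasicData ι) (x : ι → ℝ) :
    Holds (b₁.1 ++ b₂.1, b₁.2 ++ b₂.2) x ↔ Holds b₁ x ∧ Holds b₂ x := by
  simp only [Holds, List.mem_append]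
  constructor
  · rintro ⟨he, hl⟩
    exact ⟨⟨fun ℓ h => he ℓ (Or.inl h), fun ℓ h => hl ℓ (Or.inl h)⟩,
      ⟨fun ℓ h => he ℓ (Or.inr h), fun ℓ h => hl ℓ (Or.inr h)⟩⟩
  · rintro ⟨⟨h1, h2⟩, ⟨h3, h4⟩⟩
    exact ⟨fun ℓ h => h.elim (h1 ℓ) (h3 ℓ), fun ℓ h => h.elim (h2 ℓ) (h4 ℓ)⟩

lemma Semilinear.inter {S T : Set (ι → ℝ)} (hS : Semilinear S) (hT : Semilinear T) :
    Semilinear (S ∩ T) := by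
  obtain ⟨B₁, rfl⟩ := hS; obtain ⟨B₂, rfl⟩ := hT
  refine ⟨B₁.flatMap fun b₁ => B₂.map fun b₂ => (b₁.1 ++ b₂.1, b₁.2 ++ b₂.2), ?_⟩
  ext x
  simp only [Set.mem_inter_iff, Set.mem_setOf_eq, List.mem_flatMap, List.mem_map]
  constructor
  · rintro ⟨⟨b₁, hb₁, h₁⟩, ⟨b₂, hb₂, h₂⟩⟩
    exact ⟨_, ⟨b₁, hb₁, b₂, hb₂, rfl⟩, (Holds.append b₁ b₂ x).2 ⟨h₁, h₂⟩⟩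
  · rintro ⟨b, ⟨b₁, hb₁, b₂, hb₂, rfl⟩, h⟩
    obtain ⟨h₁, h₂⟩ := (Holds.append b₁ b₂ x).1 h
    exact ⟨⟨b₁, hb₁, h₁⟩, ⟨b₂, hb₂, h₂⟩⟩

lemma semilinear_not_basic (b : BasicData ι) : Semilinear {x | ¬ Holds b x} := by
  refine ⟨(b.1.flatMap fun ℓ => [(([] : List (Lin ι)), [ℓ]), ([], [ℓ.neg])]) ++
    (b.2.flatMap fun ℓ => [([ℓ], ([] : List (Lin ι))), ([], [ℓ.neg])]), ?_⟩
  ext x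
  simp only [Set.mem_setOf_eq, Holds, not_and_or, List.mem_append, List.mem_flatMap,
    List.mem_cons, List.mem_singleton, not_forall]
  constructor
  · rintro (h | h)
    · push_neg at h
      obtain ⟨ℓ, hℓ, hne⟩ := h
      rcases lt_or_gt_of_ne hne with h' | h'
      · exact ⟨([], [ℓ]), Or.inl ⟨ℓ, hℓ, Or.inl rfl⟩, by simp [Holds, h']⟩
      · exact ⟨([], [ℓ.neg]), Or.inl ⟨ℓ, hℓ, Or.inr (Or.inl rfl)⟩, by simp [Holds]; linarith⟩
    · push_neg at h
      obtain ⟨ℓ, hℓ, hge⟩ := h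
      rcases eq_or_lt_of_le hge with h' | h'
      · exact ⟨([ℓ], []), Or.inr ⟨ℓ, hℓ, Or.inl rfl⟩, by simp [Holds, h'.symm]⟩
      · exact ⟨([], [ℓ.neg]), Or.inr ⟨ℓ, hℓ, Or.inr (Or.inl rfl)⟩, by simp [Holds]; linarith⟩
  · rintro ⟨c, (⟨ℓ, hℓ, (rfl | rfl | h)⟩ | ⟨ℓ, hℓ, (rfl | rfl | h)⟩), hc⟩
    · left; push_neg
      exact ⟨ℓ, hℓ, by have := hc.2 ℓ (by simp); linarith⟩
    · left; push_neg
      refine ⟨ℓ, hℓ, ?_⟩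
      have := hc.2 ℓ.neg (by simp)
      rw [Lin.eval_neg] at this; intro h0; linarith
    · exact absurd h (by simp)
    · right; push_neg
      exact ⟨ℓ, hℓ, by have := hc.1 ℓ (by simp); linarith⟩
    · right; push_neg
      refine ⟨ℓ, hℓ, ?_⟩
      have := hc.2 ℓ.neg (by simp)
      rw [Lin.eval_neg] at this; linarith
    · exact absurd h (by simp)

lemma Semilinear.compl {S : Set (ι → ℝ)} (hS : Semilinear S) : Semilinear Sᶜ := by
  obtain ⟨B, rfl⟩ := hS
  induction B with
  | nil =>
    refine ⟨[([], [])], ?_⟩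
    ext x; simp [Holds]
  | cons b B ih =>
    have h1 : ({x | ∃ c ∈ b :: B, Holds c x} : Set (ι → ℝ))ᶜ =
        {x | ¬ Holds b x} ∩ ({x | ∃ c ∈ B, Holds c x} : Set (ι → ℝ))ᶜ := by
      ext x
      simp only [Set.mem_compl_iff, Set.mem_setOf_eq, Set.mem_inter_iff, List.mem_cons]
      constructor
      · intro h
        exact ⟨fun hb => h ⟨b, Or.inl rfl, hb⟩, fun ⟨c, hc, hcx⟩ => h ⟨c, Or.inr hc, hcx⟩⟩
      · rintro ⟨h1, h2⟩ ⟨c, (rfl | hc), hcx⟩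
        · exact h1 hcx
        · exact h2 ⟨c, hc, hcx⟩
    rw [h1]
    exact (semilinear_not_basic b).inter ih

end SLaux
namespace SLaux

variable {ι κ : Type} [Fintype ι] [Fintype κ]

/-- Pull back an affine form along a variable substitution `f : ι → κ`. -/
noncomputable def Lin.pull (f : ι → κ) [DecidableEq κ] (ℓ : Lin ι) : Lin κ :=
  ⟨fun j => ∑ i, if f i = j then ℓ.a i else 0, ℓ.c⟩

lemma Lin.eval_pull (f : ι → κ) [DecidableEq κ] (ℓ : Lin ι) (x : κ → ℝ) :
    (ℓ.pull f).eval x = ℓ.eval (x ∘ f) := by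
  simp only [Lin.eval, Lin.pull, Function.comp]
  congr 1
  calc ∑ j : κ, (∑ i : ι, if f i = j then ℓ.a i else 0) * x j
      = ∑ j : κ, ∑ i : ι, (if f i = j then ℓ.a i * x j else 0) := by
        refine Finset.sum_congr rfl fun j _ => ?_
        rw [Finset.sum_mul]
        exact Finset.sum_congr rfl fun i _ => by split <;> simp
    _ = ∑ i : ι, ∑ j : κ, (if f i = j then ℓ.a i * x j else 0) := Finset.sum_comm
    _ = ∑ i : ι, ℓ.a i * x (f i) := by
        refine Finset.sum_congr rfl fun i _ => ?_
        rw [Finset.sum_ite_eq Finset.univ (f i) (fun j => ℓ.a i * x j)]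
        simp

lemma Semilinear.comp {S : Set (ι → ℝ)} (hS : Semilinear S) (f : ι → κ) :
    Semilinear {x : κ → ℝ | x ∘ f ∈ S} := by
  classical
  obtain ⟨B, rfl⟩ := hS
  refine ⟨B.map fun b => (b.1.map (Lin.pull f), b.2.map (Lin.pull f)), ?_⟩
  ext x
  simp only [Set.mem_setOf_eq, List.mem_map]
  constructor
  · rintro ⟨b, hb, h⟩
    refine ⟨_, ⟨b, hb, rfl⟩, ?_⟩
    constructor
    · intro ℓ hℓ
      simp only [List.mem_map] at hℓ
      obtain ⟨m, hm, rfl⟩ := hℓ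
      rw [Lin.eval_pull]
      exact h.1 m hm
    · intro ℓ hℓ
      simp only [List.mem_map] at hℓ
      obtain ⟨m, hm, rfl⟩ := hℓ
      rw [Lin.eval_pull]
      exact h.2 m hm
  · rintro ⟨c, ⟨b, hb, rfl⟩, h⟩
    refine ⟨b, hb, ?_, ?_⟩
    · intro ℓ hℓ
      have := h.1 (ℓ.pull f) (List.mem_map.2 ⟨ℓ, hℓ, rfl⟩)
      rwa [Lin.eval_pull] at this
    · intro ℓ hℓ
      have := h.2 (ℓ.pull f) (List.mem_map.2 ⟨ℓ, hℓ, rfl⟩)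
      rwa [Lin.eval_pull] at this

/-! ### Projection: Fourier–Motzkin elimination -/

/-- Extend a point by a value at the `none` coordinate. -/
def extend (x : ι → ℝ) (y : ℝ) : Option ι → ℝ := fun o => o.elim y x

noncomputable def Lin.restrict (ℓ : Lin (Option ι)) : Lin ι := ⟨fun i => ℓ.a (some i), ℓ.c⟩

lemma Lin.eval_extend (ℓ : Lin (Option ι)) (x : ι → ℝ) (y : ℝ) :
    ℓ.eval (extend x y) = ℓ.a none * y + ℓ.restrict.eval x := by
  simp only [Lin.eval, Lin.restrict, Fintype.sum_option, extend, Option.elim]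
  ring

lemma exists_forall_between (L U : List ℝ) (h : ∀ l ∈ L, ∀ u ∈ U, l < u) :
    ∃ y : ℝ, (∀ l ∈ L, l < y) ∧ (∀ u ∈ U, y < u) := by
  classical
  rcases L with _ | ⟨l0, L'⟩
  · rcases U with _ | ⟨u0, U'⟩
    · exact ⟨0, by simp, by simp⟩
    · have hUne : (u0 :: U').toFinset.Nonempty := ⟨u0, by simp⟩
      refine ⟨(u0 :: U').toFinset.min' hUne - 1, by simp, fun u hu => ?_⟩
      have := Finset.min'_le (u0 :: U').toFinset u (List.mem_toFinset.2 hu)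
      linarith
  · have hLne : (l0 :: L').toFinset.Nonempty := ⟨l0, by simp⟩
    rcases U with _ | ⟨u0, U'⟩
    · refine ⟨(l0 :: L').toFinset.max' hLne + 1, fun l hl => ?_, by simp⟩
      have := Finset.le_max' (l0 :: L').toFinset l (List.mem_toFinset.2 hl)
      linarith
    · have hUne : (u0 :: U').toFinset.Nonempty := ⟨u0, by simp⟩
      set lm := (l0 :: L').toFinset.max' hLne with hlm
      set um := (u0 :: U').toFinset.min' hUne with hum
      have hlu : lm < um := by
        apply h
        · exact List.mem_toFinset.1 ((l0 :: L').toFinset.max'_mem hLne)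
        · exact List.mem_toFinset.1 ((u0 :: U').toFinset.min'_mem hUne)
      refine ⟨(lm + um) / 2, fun l hl => ?_, fun u hu => ?_⟩
      · have := Finset.le_max' (l0 :: L').toFinset l (List.mem_toFinset.2 hl)
        linarith
      · have := Finset.min'_le (u0 :: U').toFinset u (List.mem_toFinset.2 hu)
        linarith

end SLaux
namespace SLaux

variable {ι : Type} [Fintype ι]

lemma proj_stricts (L : List (Lin (Option ι))) :
    Semilinear {x : ι → ℝ | ∃ y, ∀ m ∈ L, m.eval (extend x y) < 0} := by
  classical
  set Z : List (Lin ι) := (L.filter fun m => decide (m.a none = 0)).map Lin.restrict with hZ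
  set C : List (Lin ι) := (L.filter fun m => decide (0 < m.a none)).flatMap fun p =>
    (L.filter fun m => decide (m.a none < 0)).map fun q =>
      (Lin.smul (-(q.a none)) p.restrict).add (Lin.smul (p.a none) q.restrict) with hC
  refine ⟨[([], Z ++ C)], ?_⟩
  ext x
  simp only [Set.mem_setOf_eq, List.mem_singleton, exists_eq_left, Holds,
    List.not_mem_nil, false_implies, implies_true, true_and]
  constructor
  · rintro ⟨y, hy⟩
    intro ℓ hℓ
    rcases List.mem_append.1 hℓ with hz | hc
    · rw [hZ] at hz
      obtain ⟨m, hm, rfl⟩ := List.mem_map.1 hz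
      obtain ⟨hmL, hm0⟩ := List.mem_filter.1 hm
      rw [decide_eq_true_eq] at hm0
      have := hy m hmL
      rw [Lin.eval_extend, hm0, zero_mul, zero_add] at this
      exact this
    · rw [hC] at hc
      obtain ⟨p, hp, hc⟩ := List.mem_flatMap.1 hc
      obtain ⟨q, hq, rfl⟩ := List.mem_map.1 hc
      obtain ⟨hpL, hp0⟩ := List.mem_filter.1 hp
      obtain ⟨hqL, hq0⟩ := List.mem_filter.1 hq
      rw [decide_eq_true_eq] at hp0 hq0
      have hEp := hy p hpL
      have hEq := hy q hqL
      rw [Lin.eval_extend] at hEp hEq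
      have h1 : (-(q.a none)) * (p.a none * y + p.restrict.eval x) < 0 :=
        mul_neg_of_pos_of_neg (by linarith) hEp
      have h2 : p.a none * (q.a none * y + q.restrict.eval x) < 0 :=
        mul_neg_of_pos_of_neg hp0 hEq
      rw [Lin.eval_add, Lin.eval_smul, Lin.eval_smul]
      nlinarith [h1, h2]
  · intro h
    set Lo : List ℝ := (L.filter fun q => decide (q.a none < 0)).map
      (fun q => q.restrict.eval x / (-(q.a none))) with hLo
    set Hi : List ℝ := (L.filter fun p => decide (0 < p.a none)).map
      (fun p => -(p.restrict.eval x) / p.a none) with hHi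
    have hlu : ∀ l ∈ Lo, ∀ u ∈ Hi, l < u := by
      intro l hl u hu
      rw [hLo] at hl; rw [hHi] at hu
      obtain ⟨q, hq, rfl⟩ := List.mem_map.1 hl
      obtain ⟨p, hp, rfl⟩ := List.mem_map.1 hu
      obtain ⟨hqL, hq0⟩ := List.mem_filter.1 hq
      obtain ⟨hpL, hp0⟩ := List.mem_filter.1 hp
      rw [decide_eq_true_eq] at hp0 hq0
      have hcomb := h ((Lin.smul (-(q.a none)) p.restrict).add (Lin.smul (p.a none) q.restrict))
        (List.mem_append_right _ (List.mem_flatMap.2 ⟨p, List.mem_filter.2 ⟨hpL, by simp [hp0]⟩,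
          List.mem_map.2 ⟨q, List.mem_filter.2 ⟨hqL, by simp [hq0]⟩, rfl⟩⟩))
      rw [Lin.eval_add, Lin.eval_smul, Lin.eval_smul] at hcomb
      rw [div_lt_div_iff₀ (by linarith) hp0]
      nlinarith [hcomb]
    obtain ⟨y, hy1, hy2⟩ := exists_forall_between Lo Hi hlu
    refine ⟨y, fun m hm => ?_⟩
    rw [Lin.eval_extend]
    rcases lt_trichotomy (m.a none) 0 with h0 | h0 | h0
    · have hmem : m.restrict.eval x / (-(m.a none)) ∈ Lo := by
        rw [hLo]
        exact List.mem_map.2 ⟨m, List.mem_filter.2 ⟨hm, by simp [h0]⟩, rfl⟩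
      have := hy1 _ hmem
      rw [div_lt_iff₀ (by linarith)] at this
      nlinarith [this]
    · have hmem : m.restrict ∈ Z := by
        rw [hZ]
        exact List.mem_map.2 ⟨m, List.mem_filter.2 ⟨hm, by simp [h0]⟩, rfl⟩
      have := h m.restrict (List.mem_append_left _ hmem)
      rw [h0]; linarith
    · have hmem : -(m.restrict.eval x) / m.a none ∈ Hi := by
        rw [hHi]
        exact List.mem_map.2 ⟨m, List.mem_filter.2 ⟨hm, by simp [h0]⟩, rfl⟩
      have := hy2 _ hmem
      rw [lt_div_iff₀ h0] at this
      nlinarith [this]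

noncomputable def substLin (ℓ m : Lin (Option ι)) : Lin ι :=
  m.restrict.sub (Lin.smul (m.a none / ℓ.a none) ℓ.restrict)

lemma proj_basic (E L : List (Lin (Option ι))) :
    Semilinear {x : ι → ℝ | ∃ y, Holds (E, L) (extend x y)} := by
  classical
  induction E with
  | nil =>
    have he : {x : ι → ℝ | ∃ y, Holds ([], L) (extend x y)} =
        {x : ι → ℝ | ∃ y, ∀ m ∈ L, m.eval (extend x y) < 0} := by
      ext x; simp [Holds]
    rw [he]; exact proj_stricts L
  | cons ℓ E ih =>
    have hsplit : ∀ (z : Option ι → ℝ), Holds (ℓ :: E, L) z ↔ ℓ.eval z = 0 ∧ Holds (E, L) z := by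
      intro z
      simp only [Holds, List.forall_mem_cons]
      tauto
    by_cases h0 : ℓ.a none = 0
    · have he : {x : ι → ℝ | ∃ y, Holds (ℓ :: E, L) (extend x y)} =
          {x | ℓ.restrict.eval x = 0} ∩ {x : ι → ℝ | ∃ y, Holds (E, L) (extend x y)} := by
        ext x
        simp only [Set.mem_setOf_eq, Set.mem_inter_iff]
        constructor
        · rintro ⟨y, hy⟩
          rw [hsplit, Lin.eval_extend, h0, zero_mul, zero_add] at hy
          exact ⟨hy.1, y, hy.2⟩
        · rintro ⟨h1, y, hy⟩
          exact ⟨y, (hsplit _).2 ⟨by rw [Lin.eval_extend, h0]; simpa using h1, hy⟩⟩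
      rw [he]
      exact (semilinear_eq0 _).inter ih
    · set y0 : (ι → ℝ) → ℝ := fun x => -(ℓ.restrict.eval x) / ℓ.a none with hy0
      have key1 : ∀ x, ℓ.eval (extend x (y0 x)) = 0 := by
        intro x; rw [Lin.eval_extend, hy0]; field_simp; ring
      have key2 : ∀ (m : Lin (Option ι)) (x : ι → ℝ),
          (substLin ℓ m).eval x = m.eval (extend x (y0 x)) := by
        intro m x
        rw [Lin.eval_extend, substLin, Lin.eval_sub, Lin.eval_smul, hy0]
        field_simp
        ring
      have key3 : ∀ (x : ι → ℝ) (y : ℝ), ℓ.eval (extend x y) = 0 → y = y0 x := by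
        intro x y hy
        rw [Lin.eval_extend] at hy
        rw [hy0]
        field_simp
        linarith
      have he : {x : ι → ℝ | ∃ y, Holds (ℓ :: E, L) (extend x y)} =
          {x | Holds (E.map (substLin ℓ), L.map (substLin ℓ)) x} := by
        ext x
        simp only [Set.mem_setOf_eq]
        constructor
        · rintro ⟨y, hy⟩
          rw [hsplit] at hy
          obtain ⟨h1, h2⟩ := hy
          have hyy := key3 x y h1
          subst hyy
          constructor
          · intro m' hm'
            obtain ⟨m, hm, rfl⟩ := List.mem_map.1 hm'
            rw [key2]
            exact h2.1 m hm
          · intro m' hm'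
            obtain ⟨m, hm, rfl⟩ := List.mem_map.1 hm'
            rw [key2]
            exact h2.2 m hm
        · intro hb
          refine ⟨y0 x, (hsplit _).2 ⟨key1 x, ?_, ?_⟩⟩
          · intro m hm
            rw [← key2]
            exact hb.1 _ (List.mem_map.2 ⟨m, hm, rfl⟩)
          · intro m hm
            rw [← key2]
            exact hb.2 _ (List.mem_map.2 ⟨m, hm, rfl⟩)
      rw [he]
      exact semilinear_basic _

lemma Semilinear.proj {S : Set (Option ι → ℝ)} (hS : Semilinear S) :
    Semilinear {x : ι → ℝ | ∃ y, extend x y ∈ S} := by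
  obtain ⟨B, rfl⟩ := hS
  induction B with
  | nil => simpa using semilinear_empty
  | cons b B ih =>
    have he : {x : ι → ℝ | ∃ y, extend x y ∈ {z | ∃ c ∈ b :: B, Holds c z}} =
        {x : ι → ℝ | ∃ y, Holds (b.1, b.2) (extend x y)} ∪
        {x : ι → ℝ | ∃ y, extend x y ∈ {z | ∃ c ∈ B, Holds c z}} := by
      ext x
      simp only [Set.mem_setOf_eq, Set.mem_union, List.mem_cons]
      constructor
      · rintro ⟨y, c, (rfl | hc), hcy⟩
        · exact Or.inl ⟨y, hcy⟩
        · exact Or.inr ⟨y, c, hc, hcy⟩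
      · rintro (⟨y, hy⟩ | ⟨y, c, hc, hcy⟩)
        · exact ⟨y, b, Or.inl rfl, hy⟩
        · exact ⟨y, c, Or.inr hc, hcy⟩
    rw [he]
    exact (proj_basic b.1 b.2).union ih

end SLaux
namespace SLaux

open FirstOrder.Language

lemma term_lin {ι : Type} [Fintype ι] [DecidableEq ι]
    (t : (LM[[↥(Set.univ : Set ℝ)]]).Term ι) :
    ∃ ℓ : Lin ι, ∀ x : ι → ℝ, t.realize x = ℓ.eval x := by
  induction t with
  | var i =>
    refine ⟨⟨fun j => if j = i then 1 else 0, 0⟩, fun x => ?_⟩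
    simp only [Term.realize, Lin.eval, ite_mul, one_mul, zero_mul, add_zero]
    rw [Finset.sum_ite_eq' Finset.univ i x]
    simp
  | @func l f ts ih =>
    rcases f with f | c
    · match l, f with
      | 2, f =>
        obtain ⟨ℓ₀, h₀⟩ := ih 0
        obtain ⟨ℓ₁, h₁⟩ := ih 1
        refine ⟨ℓ₀.add ℓ₁, fun x => ?_⟩
        have : Term.realize x (Term.func (Sum.inl f) ts) =
            Term.realize x (ts 0) + Term.realize x (ts 1) := rfl
        rw [this, h₀, h₁, Lin.eval_add]
    · match l, c with
      | 0, c =>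
        refine ⟨Lin.const (c : ℝ), fun x => ?_⟩
        have : Term.realize x (Term.func (Sum.inr c) ts) = (c : ℝ) := rfl
        rw [this, Lin.eval_const]

lemma formula_semilinear {n : ℕ} (φ : (LM[[↥(Set.univ : Set ℝ)]]).BoundedFormula (Fin 1) n) :
    Semilinear {x : (Fin 1 ⊕ Fin n) → ℝ |
      BoundedFormula.Realize φ (x ∘ Sum.inl) (x ∘ Sum.inr)} := by
  induction φ with
  | @falsum k =>
    have : {x : (Fin 1 ⊕ Fin k) → ℝ |
        BoundedFormula.Realize
          (BoundedFormula.falsum : (LM[[↥(Set.univ : Set ℝ)]]).BoundedFormula (Fin 1) k)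
          (x ∘ Sum.inl) (x ∘ Sum.inr)} = ∅ := by
      ext x; simp [BoundedFormula.Realize]
    rw [this]; exact semilinear_empty
  | @equal k t₁ t₂ =>
    obtain ⟨ℓ₁, h₁⟩ := term_lin t₁
    obtain ⟨ℓ₂, h₂⟩ := term_lin t₂
    have he : {x : (Fin 1 ⊕ Fin k) → ℝ |
        BoundedFormula.Realize (BoundedFormula.equal t₁ t₂) (x ∘ Sum.inl) (x ∘ Sum.inr)} =
        {x | (ℓ₁.sub ℓ₂).eval x = 0} := by
      ext x
      have : BoundedFormula.Realize (BoundedFormula.equal t₁ t₂) (x ∘ Sum.inl) (x ∘ Sum.inr) ↔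
          t₁.realize (Sum.elim (x ∘ Sum.inl) (x ∘ Sum.inr)) =
          t₂.realize (Sum.elim (x ∘ Sum.inl) (x ∘ Sum.inr)) := Iff.rfl
      rw [Set.mem_setOf_eq, this, Sum.elim_comp_inl_inr, h₁, h₂, Set.mem_setOf_eq, Lin.eval_sub,
        sub_eq_zero]
    rw [he]; exact semilinear_eq0 _
  | @rel k l R ts =>
    rcases R with R | R
    · match l, R with
      | 1, R =>
        obtain ⟨ℓ, hℓ⟩ := term_lin (ts 0)
        have he : {x : (Fin 1 ⊕ Fin k) → ℝ |
            BoundedFormula.Realize (BoundedFormula.rel (Sum.inl R) ts)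
              (x ∘ Sum.inl) (x ∘ Sum.inr)} =
            ({x | (ℓ.neg).eval x = 0} ∪ {x | (ℓ.neg).eval x < 0}) ∩
            ({x | (ℓ.sub (Lin.const 1)).eval x = 0} ∪
              {x | (ℓ.sub (Lin.const 1)).eval x < 0}) := by
          ext x
          have hrel : BoundedFormula.Realize (BoundedFormula.rel (Sum.inl R) ts)
              (x ∘ Sum.inl) (x ∘ Sum.inr) ↔
              (ts 0).realize (Sum.elim (x ∘ Sum.inl) (x ∘ Sum.inr)) ∈
                Set.Icc (0 : ℝ) 1 := Iff.rfl
          rw [Set.mem_setOf_eq, hrel, Sum.elim_comp_inl_inr, hℓ]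
          simp only [Set.mem_Icc, Set.mem_inter_iff, Set.mem_union, Set.mem_setOf_eq,
            Lin.eval_neg, Lin.eval_sub, Lin.eval_const]
          constructor
          · rintro ⟨h1, h2⟩
            constructor
            · rcases eq_or_lt_of_le h1 with h | h
              · exact Or.inl (by linarith)
              · exact Or.inr (by linarith)
            · rcases eq_or_lt_of_le h2 with h | h
              · exact Or.inl (by linarith)
              · exact Or.inr (by linarith)
          · rintro ⟨h1 | h1, h2 | h2⟩ <;> constructor <;> linarith
        rw [he]
        exact (((semilinear_eq0 _).union (semilinear_lt0 _))).inter
          ((semilinear_eq0 _).union (semilinear_lt0 _))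
    · exact Empty.elim R
  | @imp k φ ψ ih₁ ih₂ =>
    have he : {x : (Fin 1 ⊕ Fin k) → ℝ |
        BoundedFormula.Realize (φ.imp ψ) (x ∘ Sum.inl) (x ∘ Sum.inr)} =
        {x : (Fin 1 ⊕ Fin k) → ℝ |
          BoundedFormula.Realize φ (x ∘ Sum.inl) (x ∘ Sum.inr)}ᶜ ∪
        {x : (Fin 1 ⊕ Fin k) → ℝ |
          BoundedFormula.Realize ψ (x ∘ Sum.inl) (x ∘ Sum.inr)} := by
      ext x
      simp only [Set.mem_setOf_eq, Set.mem_union, Set.mem_compl_iff,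
        BoundedFormula.realize_imp]
      tauto
    rw [he]
    exact ih₁.compl.union ih₂
  | @all k φ ih =>
    set f : (Fin 1 ⊕ Fin (k + 1)) → Option (Fin 1 ⊕ Fin k) :=
      Sum.elim (fun a => some (Sum.inl a))
        (fun i => Fin.lastCases none (fun j => some (Sum.inr j)) i) with hf
    have key : ∀ (x : (Fin 1 ⊕ Fin k) → ℝ) (y : ℝ),
        BoundedFormula.Realize φ ((extend x y ∘ f) ∘ Sum.inl) ((extend x y ∘ f) ∘ Sum.inr) ↔
        BoundedFormula.Realize φ (x ∘ Sum.inl) (Fin.snoc (x ∘ Sum.inr) y) := by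
      intro x y
      have h1 : (extend x y ∘ f) ∘ Sum.inl = x ∘ Sum.inl := by
        funext a; rfl
      have h2 : (extend x y ∘ f) ∘ Sum.inr = Fin.snoc (x ∘ Sum.inr) y := by
        funext i
        refine Fin.lastCases ?_ ?_ i
        · simp [hf, extend, Function.comp, Fin.snoc_last]
        · intro j
          simp [hf, extend, Function.comp, Fin.snoc_castSucc]
      rw [h1, h2]
    have he : {x : (Fin 1 ⊕ Fin k) → ℝ |
        BoundedFormula.Realize φ.all (x ∘ Sum.inl) (x ∘ Sum.inr)} =
        ({x : (Fin 1 ⊕ Fin k) → ℝ | ∃ y, extend x y ∈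
          ({z : Option (Fin 1 ⊕ Fin k) → ℝ | z ∘ f ∈
            {w : (Fin 1 ⊕ Fin (k + 1)) → ℝ |
              BoundedFormula.Realize φ (w ∘ Sum.inl) (w ∘ Sum.inr)}})ᶜ})ᶜ := by
      ext x
      simp only [Set.mem_setOf_eq, Set.mem_compl_iff, BoundedFormula.realize_all, not_exists,
        not_not]
      constructor
      · intro h y
        exact (key x y).2 (h y)
      · intro h y
        exact (key x y).1 (h y)
    rw [he]
    exact ((ih.comp f).compl.proj).compl

lemma convex_basic {ι : Type} [Fintype ι] (b : BasicData ι) :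
    Convex ℝ {r : ℝ | Holds b (fun _ => r)} := by
  have hev : ∀ (ℓ : Lin ι) (r : ℝ), ℓ.eval (fun _ => r) = (∑ i, ℓ.a i) * r + ℓ.c := by
    intro ℓ r; simp [Lin.eval, Finset.sum_mul]
  intro r hr s hs p q hp hq hpq
  have haux : ∀ (P Q : ℝ), P ≤ 0 → Q ≤ 0 → p * P + q * Q ≤ 0 := by
    intro P Q hP hQ
    have := mul_nonneg hp (neg_nonneg.2 hP)
    have := mul_nonneg hq (neg_nonneg.2 hQ)
    nlinarith
  constructor
  · intro ℓ hℓ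
    have h1 := hr.1 ℓ hℓ
    have h2 := hs.1 ℓ hℓ
    rw [hev] at h1 h2 ⊢
    have hq1 : q = 1 - p := by linarith
    simp only [smul_eq_mul]
    rw [hq1]
    linear_combination p * h1 + (1 - p) * h2
  · intro ℓ hℓ
    have h1 := hr.2 ℓ hℓ
    have h2 := hs.2 ℓ hℓ
    rw [hev] at h1 h2 ⊢
    simp only [smul_eq_mul]
    set A := ∑ i, ℓ.a i
    have hkey : A * (p * r + q * s) + ℓ.c = p * (A * r + ℓ.c) + q * (A * s + ℓ.c) := by
      have hq1 : q = 1 - p := by linarith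
      rw [hq1]; ring
    rw [hkey]
    rcases eq_or_lt_of_le hp with h | h
    · have hq1 : q = 1 := by linarith
      rw [← h, hq1]; simpa using h2
    · have e1 : p * (A * r + ℓ.c) < 0 := mul_neg_of_pos_of_neg h h1
      have e2 : q * (A * s + ℓ.c) ≤ 0 := mul_nonpos_of_nonneg_of_nonpos hq (le_of_lt h2)
      linarith

lemma key_subgroup {β : Type} (H : AddSubgroup ℝ) (B : List β) (Q : β → Set ℝ)
    (hc : ∀ b, Convex ℝ (Q b)) (hH : (H : Set ℝ) = {r | ∃ b ∈ B, r ∈ Q b}) :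
    (H : Set ℝ) = {0} ∨ (H : Set ℝ) = Set.univ := by
  classical
  by_cases htriv : ∀ r ∈ H, r = (0 : ℝ)
  · left
    ext r
    simp only [Set.mem_singleton_iff, SetLike.mem_coe]
    exact ⟨fun h => htriv r h, fun h => h ▸ H.zero_mem⟩
  · right
    push_neg at htriv
    obtain ⟨a, haH, ha0⟩ := htriv
    have ha' : |a| ∈ H := by
      rcases abs_choice a with h | h
      · rw [h]; exact haH
      · rw [h]; exact H.neg_mem haH
    have hapos : (0 : ℝ) < |a| := abs_pos.2 ha0
    set α := |a| with hα
    have hmult : ∀ n : ℕ, (n : ℝ) * α ∈ H := by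
      intro n
      have := H.nsmul_mem ha' n
      simpa [nsmul_eq_mul] using this
    have hex : ∀ n : ℕ, ∃ b ∈ B, ((n : ℝ) * α) ∈ Q b := by
      intro n
      have := hmult n
      rw [← SetLike.mem_coe, hH] at this
      exact this
    choose g hg1 hg2 using hex
    have hfin : Finite {b : β // b ∈ B} := List.finite_toSet B
    obtain ⟨m, n, hmn, heq⟩ := Finite.exists_ne_map_eq_of_infinite
      (fun k : ℕ => (⟨g k, hg1 k⟩ : {b : β // b ∈ B}))
    -- wlog m < n
    have main : ∀ m n : ℕ, m < n → g m = g n → (H : Set ℝ) = Set.univ := by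
      intro m n hlt hg
      set u : ℝ := (m : ℝ) * α with hu
      set v : ℝ := (n : ℝ) * α with hv
      have huv : u < v := by
        rw [hu, hv]
        have : (m : ℝ) < n := by exact_mod_cast hlt
        nlinarith
      have hIcc : Set.Icc u v ⊆ Q (g m) := by
        have := (hc (g m)).ordConnected
        exact this.out (hg2 m) (hg ▸ hg2 n)
      have hQH : Q (g m) ⊆ (H : Set ℝ) := by
        intro r hr
        rw [hH]
        exact ⟨g m, hg1 m, hr⟩
      have huH : u ∈ H := hmult m
      set ε : ℝ := v - u with hε
      have hεpos : 0 < ε := by rw [hε]; linarith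
      have hseg : ∀ w : ℝ, 0 ≤ w → w ≤ ε → w ∈ H := by
        intro w h1 h2
        have : w + u ∈ Set.Icc u v := ⟨by linarith, by rw [hε] at h2; linarith⟩
        have hmem : w + u ∈ H := hQH (hIcc this)
        have := H.sub_mem hmem huH
        simpa using this
      have hseg' : ∀ w : ℝ, |w| ≤ ε → w ∈ H := by
        intro w hw
        rcases le_or_gt 0 w with h | h
        · exact hseg w h (by rwa [abs_of_nonneg h] at hw)
        · have : -w ∈ H := hseg (-w) (by linarith) (by rwa [abs_of_neg h] at hw)
          simpa using H.neg_mem this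
      ext r
      simp only [Set.mem_univ, iff_true, SetLike.mem_coe]
      obtain ⟨N, hN⟩ := exists_nat_ge (|r| / ε)
      have hN1 : (0 : ℝ) < N + 1 := by positivity
      have hsr : |r / (N + 1 : ℕ)| ≤ ε := by
        push_cast
        rw [abs_div, abs_of_pos hN1, div_le_iff₀ hN1]
        have : |r| ≤ N * ε := by
          rw [div_le_iff₀ hεpos] at hN
          linarith
        nlinarith [hεpos]
      have hmem : r / ((N + 1 : ℕ) : ℝ) ∈ H := by
        have := hseg' (r / ((N + 1 : ℕ) : ℝ)) (by push_cast; push_cast at hsr; exact hsr)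
        exact this
      have := H.nsmul_mem hmem (N + 1)
      have hne : ((N + 1 : ℕ) : ℝ) ≠ 0 := by positivity
      have heq2 : (N + 1 : ℕ) • (r / ((N + 1 : ℕ) : ℝ)) = r := by
        rw [nsmul_eq_mul, mul_div_cancel₀ _ hne]
      rwa [heq2] at this
    rcases lt_or_gt_of_ne hmn with h | h
    · exact main m n h (congrArg Subtype.val heq)
    · exact main n m h (congrArg Subtype.val heq).symm

end SLaux

/-- Every subgroup of `(ℝ, +)` which, as a subset of `ℝ`, is definable with parameters in the
structure `(ℝ; +, [0,1])` is either `{0}` or all of `ℝ`. -/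
theorem statement4 (H : AddSubgroup ℝ)
    (hdef : Set.Definable₁ (Set.univ : Set ℝ) LM (H : Set ℝ)) :
    (H : Set ℝ) = {0} ∨ (H : Set ℝ) = Set.univ := by
  obtain ⟨φ, hφ⟩ := hdef
  have hsl := SLaux.formula_semilinear (n := 0) φ
  have hset : {x : (Fin 1 ⊕ Fin 0) → ℝ |
      FirstOrder.Language.BoundedFormula.Realize φ (x ∘ Sum.inl) (x ∘ Sum.inr)} =
      {x : (Fin 1 ⊕ Fin 0) → ℝ | x (Sum.inl 0) ∈ (H : Set ℝ)} := by
    ext x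
    have h2 := Set.ext_iff.1 hφ (x ∘ Sum.inl)
    simp only [Set.mem_setOf_eq] at h2
    simp only [Set.mem_setOf_eq]
    rw [show x ∘ Sum.inr = (@default (Fin 0 → ℝ) Unique.instInhabited) from Subsingleton.elim _ _]
    simpa only [FirstOrder.Language.Formula.Realize, Function.comp_apply] using h2.symm
  rw [hset] at hsl
  obtain ⟨B, hB⟩ := hsl
  apply SLaux.key_subgroup H B (fun b => {r : ℝ | SLaux.Holds b (fun _ => r)})
    (fun b => SLaux.convex_basic b)
  ext r
  have := Set.ext_iff.1 hB (fun _ => r)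
  simp only [Set.mem_setOf_eq] at this ⊢
  exact this
end

section
/- Let L be a first-order language, M ≼ N an elementary pair of L-structures, and A ⊆ M. Let q be an A-invariant complete type over M in a (possibly infinite) tuple of variables x̄, and let q′ be a complete type over N extending q which is a strong heir extension of q over A. Then q′ is A-invariant, and q′ is the unique A-invariant complete type over N extending q. -/
/-!
By the strong heir property (already with no extra parameters from `M`), each `φ(x̄, c) ∈ q'`
is mirrored by some `φ(x̄, b) ∈ q` with `b` in `M` and `tp(b/A) = tp(c/A)`; by invariance of `q`,
then `φ(x̄, b) ∈ q` for *every* such `b`. Two `A`-conjugate tuples `c, c'` would otherwise give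
`φ(x̄, b) ∈ q` and `¬φ(x̄, b) ∈ q`, so `q'` is `A`-invariant. Any `A`-invariant extension `q''`
of `q` contains `φ(x̄, b)` and hence `φ(x̄, c)`, so `q' ⊆ q''`, and nested complete types agree.
-/

open FirstOrder

universe u v w x

namespace Stmt6

variable (L : FirstOrder.Language.{u, v})

/-- The tuples `b` and `b'` (from `N`) have the same type over the parameter set `A ⊆ N`. -/
def SameTypeOver {N : Type w} [L.Structure N] (A : Set N) {k : ℕ} (b b' : Fin k → N) : Prop :=
  ∀ (m : ℕ) (ψ : L.Formula (Fin k ⊕ Fin m)) (a : Fin m → N), (∀ i, a i ∈ A) →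
    (ψ.Realize (Sum.elim b a) ↔ ψ.Realize (Sum.elim b' a))

/-- `q` is a complete type over the parameter set `D ⊆ N` in variables indexed by `ι`:
`q` only uses parameters from `D`, and `q` is exactly the set of formulas `φ(x̄, b̄)` (with
`b̄` from `D`) satisfied by some fixed realization `c` of `q` in an elementary extension of
`N`.  (For `D` the carrier of an elementary substructure `M ≼ N` this is equivalent to `q`
being a maximal set of formulas with parameters in `M` which, together with the elementary
diagram of `M`, is satisfiable.) -/
def IsCompleteTypeOver (N : Type w) [L.Structure N] (ι : Type x) (D : Set N)
    (q : ∀ k : ℕ, L.Formula (ι ⊕ Fin k) → (Fin k → N) → Prop) : Prop :=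
  (∀ k φ b, q k φ b → ∀ i, b i ∈ D) ∧
  ∃ (Q : Type (max u v w x)) (iQ : L.Structure Q),
    letI := iQ
    ∃ (g : N ↪ₑ[L] Q) (c : ι → Q),
      ∀ (k : ℕ) (φ : L.Formula (ι ⊕ Fin k)) (b : Fin k → N), (∀ i, b i ∈ D) →
        (q k φ b ↔ φ.Realize (Sum.elim c fun i => g (b i)))

/-- The type `q` over `D` is invariant over `A`: membership of `φ(x̄, b̄)` in `q` depends only
on the type of `b̄` over `A`. -/
def IsInvariantOver {N : Type w} [L.Structure N] {ι : Type x} (A D : Set N)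
    (q : ∀ k : ℕ, L.Formula (ι ⊕ Fin k) → (Fin k → N) → Prop) : Prop :=
  ∀ (k : ℕ) (φ : L.Formula (ι ⊕ Fin k)) (b b' : Fin k → N),
    (∀ i, b i ∈ D) → (∀ i, b' i ∈ D) → SameTypeOver L A b b' → (q k φ b ↔ q k φ b')

/-- `q'` (a type over `N`) is a strong heir extension over `A` (of its restriction to the
parameter set `S`): for every finite tuple `mt` from `S`, every formula `φ(x̄, b̄) ∈ q'` with
`b̄` from `N`, there is a tuple `b'` from `S` with `φ(x̄, b̄') ∈ q'` and
`tp(b̄/A ∪ mt) = tp(b̄'/A ∪ mt)`. -/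
def IsStrongHeirOver {N : Type w} [L.Structure N] {ι : Type x} (A S : Set N)
    (q' : ∀ k : ℕ, L.Formula (ι ⊕ Fin k) → (Fin k → N) → Prop) : Prop :=
  ∀ (m : ℕ) (mt : Fin m → N), (∀ i, mt i ∈ S) →
    ∀ (k : ℕ) (φ : L.Formula (ι ⊕ Fin k)) (b : Fin k → N), q' k φ b →
      ∃ b' : Fin k → N, (∀ i, b' i ∈ S) ∧ q' k φ b' ∧
        SameTypeOver L (A ∪ Set.range mt) b b'

variable {L} {N : Type w} [L.Structure N] {ι : Type x}
  {q q' p : ∀ k : ℕ, L.Formula (ι ⊕ Fin k) → (Fin k → N) → Prop}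
  {A S D : Set N} {k : ℕ} {φ : L.Formula (ι ⊕ Fin k)} {b c c' : Fin k → N}

namespace SameTypeOver

theorem symm (h : SameTypeOver L A b c) : SameTypeOver L A c b :=
  fun m ψ a ha => (h m ψ a ha).symm

theorem trans (h : SameTypeOver L A b c) (h' : SameTypeOver L A c c') :
    SameTypeOver L A b c' :=
  fun m ψ a ha => (h m ψ a ha).trans (h' m ψ a ha)

theorem mono {B : Set N} (h : SameTypeOver L B b c) (hAB : A ⊆ B) : SameTypeOver L A b c :=
  fun m ψ a ha => h m ψ a fun i => hAB (ha i)

end SameTypeOver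

namespace IsCompleteTypeOver

theorem not_iff (hq : IsCompleteTypeOver L N ι D q) (hb : ∀ i, b i ∈ D) :
    q k φ.not b ↔ ¬ q k φ b := by
  obtain ⟨-, Q, iQ, g, c, hreal⟩ := hq
  rw [hreal k φ.not b hb, hreal k φ b hb, Language.Formula.realize_not]

theorem iff_of_forall_imp {D' : Set N} (hq : IsCompleteTypeOver L N ι D q)
    (hp : IsCompleteTypeOver L N ι D' p) (himp : ∀ k φ b, q k φ b → p k φ b)
    (hb : ∀ i, b i ∈ D) (hb' : ∀ i, b i ∈ D') : p k φ b ↔ q k φ b := by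
  refine ⟨fun hpφ => ?_, himp k φ b⟩
  by_contra hqφ
  exact (hp.not_iff hb').mp (himp k φ.not b ((hq.not_iff hb).mpr hqφ)) hpφ

end IsCompleteTypeOver

theorem IsStrongHeirOver.exists_sameTypeOver (hheir : IsStrongHeirOver L A S q')
    (hc : q' k φ c) : ∃ b, (∀ i, b i ∈ S) ∧ q' k φ b ∧ SameTypeOver L A c b := by
  obtain ⟨b, hbS, hb, hcb⟩ := hheir 0 Fin.elim0 (fun i => i.elim0) k φ c hc
  exact ⟨b, hbS, hb, hcb.mono Set.subset_union_left⟩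

section StrongHeir

variable (hq : IsCompleteTypeOver L N ι S q) (hqinv : IsInvariantOver L A S q)
  (hq' : IsCompleteTypeOver L N ι Set.univ q') (hext : ∀ k φ b, q k φ b → q' k φ b)
  (hheir : IsStrongHeirOver L A S q')
include hq hqinv hq' hext hheir

theorem IsStrongHeirOver.mem_of_sameTypeOver (hc : q' k φ c) (hbS : ∀ i, b i ∈ S)
    (hcb : SameTypeOver L A c b) : q k φ b := by
  obtain ⟨b₀, hb₀S, hb₀, hcb₀⟩ := hheir.exists_sameTypeOver hc
  have hqb₀ : q k φ b₀ := (hq.iff_of_forall_imp hq' hext hb₀S fun _ => trivial).mp hb₀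
  exact (hqinv k φ b₀ b hb₀S hbS (hcb₀.symm.trans hcb)).mp hqb₀

theorem IsStrongHeirOver.isInvariantOver : IsInvariantOver L A Set.univ q' := by
  have himp : ∀ k φ (c c' : Fin k → N), SameTypeOver L A c c' → q' k φ c → q' k φ c' := by
    intro k φ c c' hcc' hc
    by_contra hc'
    obtain ⟨b, hbS, -, hcb⟩ := hheir.exists_sameTypeOver hc
    have hqb := hheir.mem_of_sameTypeOver hq hqinv hq' hext hc hbS hcb
    have hqb_not := hheir.mem_of_sameTypeOver hq hqinv hq' hext
      ((hq'.not_iff fun _ => trivial).mpr hc') hbS (hcc'.symm.trans hcb)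
    exact (hq.not_iff hbS).mp hqb_not hqb
  exact fun k φ c c' _ _ hcc' => ⟨himp k φ c c' hcc', himp k φ c' c hcc'.symm⟩

theorem IsStrongHeirOver.imp_of_isInvariantOver (hpinv : IsInvariantOver L A Set.univ p)
    (hpext : ∀ k φ b, q k φ b → p k φ b) (hc : q' k φ c) : p k φ c := by
  obtain ⟨b, hbS, -, hcb⟩ := hheir.exists_sameTypeOver hc
  have hpb := hpext k φ b (hheir.mem_of_sameTypeOver hq hqinv hq' hext hc hbS hcb)
  exact (hpinv k φ c b (fun _ => trivial) (fun _ => trivial) hcb).mpr hpb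

end StrongHeir

end Stmt6

open Stmt6 in
theorem statement6_general (L : FirstOrder.Language.{u, v}) (N : Type w) [L.Structure N]
    (S : L.ElementarySubstructure N) (A : Set N) (ι : Type x)
    (q q' : ∀ k : ℕ, L.Formula (ι ⊕ Fin k) → (Fin k → N) → Prop)
    (hq : IsCompleteTypeOver L N ι (S : Set N) q)
    (hqinv : IsInvariantOver L A (S : Set N) q)
    (hq' : IsCompleteTypeOver L N ι Set.univ q')
    (hext : ∀ k φ b, q k φ b → q' k φ b)
    (hheir : IsStrongHeirOver L A (S : Set N) q') :
    IsInvariantOver L A Set.univ q' ∧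
      ∀ q'' : ∀ k : ℕ, L.Formula (ι ⊕ Fin k) → (Fin k → N) → Prop,
        IsCompleteTypeOver L N ι Set.univ q'' →
        (∀ k φ b, q k φ b → q'' k φ b) →
        IsInvariantOver L A Set.univ q'' →
        ∀ k φ b, q'' k φ b ↔ q' k φ b :=
  ⟨hheir.isInvariantOver hq hqinv hq' hext, fun _ hq'' hext'' hinv'' _ _ _ =>
    hq'.iff_of_forall_imp hq''
      (fun _ _ _ => hheir.imp_of_isInvariantOver hq hqinv hq' hext hinv'' hext'')
      (fun _ => trivial) fun _ => trivial⟩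

open Stmt6 in
/-- Let `M ≼ N` (with `M` realized as an elementary substructure `S` of `N`), `A ⊆ M`.  If `q`
is an `A`-invariant complete type over `M` in variables `x̄` (indexed by `ι`), and `q'` is a
complete type over `N` extending `q` which is a strong heir extension of `q` over `A`, then
`q'` is `A`-invariant and is the unique `A`-invariant complete type over `N` extending `q`. -/
theorem statement6 (L : FirstOrder.Language.{u, v}) (N : Type w) [L.Structure N]
    (S : L.ElementarySubstructure N) (A : Set N) (hA : A ⊆ (S : Set N)) (ι : Type x)
    (q q' : ∀ k : ℕ, L.Formula (ι ⊕ Fin k) → (Fin k → N) → Prop)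
    (hq : IsCompleteTypeOver L N ι (S : Set N) q)
    (hqinv : IsInvariantOver L A (S : Set N) q)
    (hq' : IsCompleteTypeOver L N ι Set.univ q')
    (hext : ∀ k φ b, q k φ b → q' k φ b)
    (hheir : IsStrongHeirOver L A (S : Set N) q') :
    IsInvariantOver L A Set.univ q' ∧
      ∀ q'' : ∀ k : ℕ, L.Formula (ι ⊕ Fin k) → (Fin k → N) → Prop,
        IsCompleteTypeOver L N ι Set.univ q'' →
        (∀ k φ b, q k φ b → q'' k φ b) →
        IsInvariantOver L A Set.univ q'' →
        ∀ k φ b, q'' k φ b ↔ q' k φ b :=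
  statement6_general L N S A ι q q' hq hqinv hq' hext hheir
end

section
/- Let L′ and L be first-order languages, let I be a locally finite L′-structure whose age has the embedding Ramsey property, let M be an L-structure, k ∈ ℕ, and let (a_i)_{i∈I} be a family of k-tuples from M. Then for every finite substructure B of I, every finite family A₁,…,A_m of substructures of B, and every family of L-formulas φ₁,…,φ_m, where φ_j has its free variables indexed by A_j × {0,…,k−1}, there exists an embedding e ∈ Emb(B, I) such that for every j ≤ m and any two embeddings h, h′ ∈ Emb(A_j, B): M ⊨ φ_j((a_{e(h(g))})_{g∈A_j}) if and only if M ⊨ φ_j((a_{e(h′(g))})_{g∈A_j}). -/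
open FirstOrder CategoryTheory

universe u₁ v₁ u₂ v₂ w w₂

/-- `C → (B)^A_r`: for every coloring of the embeddings of `A` into `C` with `r` colors there
is an embedding `f` of `B` into `C` such that the coloring is constant on
`{f ∘ e : e ∈ Emb(A,B)}`. -/
def ArrowsERP (L : FirstOrder.Language.{u₁, v₁}) (A B C : CategoryTheory.Bundled.{w} L.Structure)
    (r : ℕ) : Prop :=
  ∀ χ : (A ↪[L] C) → Fin r, ∃ f : B ↪[L] C,
    ∀ e e' : A ↪[L] B, χ (f.comp e) = χ (f.comp e')

/-- A class `K` of `L`-structures has the embedding Ramsey property if for all `A, B ∈ K` with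
`A` (isomorphic to) a substructure of `B` (i.e. `A` embeds into `B`) and every number of
colors `r` there is `C ∈ K` with `C → (B)^A_r`. -/
def HasERP (L : FirstOrder.Language.{u₁, v₁})
    (K : Set (CategoryTheory.Bundled.{w} L.Structure)) : Prop :=
  ∀ A ∈ K, ∀ B ∈ K, Nonempty (A ↪[L] B) → ∀ r : ℕ, ∃ C ∈ K, ArrowsERP L A B C r

/-- Key inductive lemma: iterated application of the embedding Ramsey property. -/
lemma key_erp_lemma (L' : FirstOrder.Language.{u₁, v₁}) (L : FirstOrder.Language.{u₂, v₂})
    (I : Type w) [L'.Structure I] (herp : HasERP L' (L'.age I))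
    (M : Type w₂) [L.Structure M] (k : ℕ) (a : I → Fin k → M) :
    ∀ (m : ℕ) (A : Fin m → CategoryTheory.Bundled.{w} L'.Structure),
      (∀ j, A j ∈ L'.age I) →
      ∀ (φ : (j : Fin m) → L.Formula ((A j) × Fin k))
        (D : CategoryTheory.Bundled.{w} L'.Structure), D ∈ L'.age I →
      ∃ e : D ↪[L'] I, ∀ (j : Fin m) (h h' : A j ↪[L'] D),
        ((φ j).Realize (fun p => a (e (h p.1)) p.2) ↔
          (φ j).Realize (fun p => a (e (h' p.1)) p.2)) := by
  intro m
  induction m with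
  | zero =>
    intro A hA φ D hD
    exact ⟨hD.2.some, fun j => j.elim0⟩
  | succ n IH =>
    intro A hA φ D hD
    by_cases hne : Nonempty ((A 0) ↪[L'] D)
    · obtain ⟨C, hC, hram⟩ := herp (A 0) (hA 0) D hD hne 2
      obtain ⟨e', he'⟩ := IH (fun j => A j.succ) (fun j => hA j.succ) (fun j => φ j.succ) C hC
      classical
      set χ : ((A 0) ↪[L'] C) → Fin 2 :=
        fun u => if (φ 0).Realize (fun p => a (e' (u p.1)) p.2) then 0 else 1 with hχ
      obtain ⟨f, hf⟩ := hram χ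
      refine ⟨e'.comp f, fun j => ?_⟩
      induction j using Fin.cases with
      | zero =>
        intro h h'
        have hc := hf h h'
        simp only [hχ, FirstOrder.Language.Embedding.comp_apply] at hc
        rcases Classical.em ((φ 0).Realize fun p => a (e' (f (h p.1))) p.2) with h1 | h1 <;>
          rcases Classical.em ((φ 0).Realize fun p => a (e' (f (h' p.1))) p.2) with h2 | h2
        · exact iff_of_true h1 h2
        · have hc : (0 : Fin 2) = 1 := by simpa [h1, h2] using hc
          exact absurd hc (by decide)
        · have hc : (1 : Fin 2) = 0 := by simpa [h1, h2] using hc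
          exact absurd hc (by decide)
        · exact iff_of_false h1 h2
      | succ i =>
        intro h h'
        exact he' i (f.comp h) (f.comp h')
    · obtain ⟨e, he⟩ := IH (fun j => A j.succ) (fun j => hA j.succ) (fun j => φ j.succ) D hD
      refine ⟨e, fun j => ?_⟩
      induction j using Fin.cases with
      | zero => intro h _; exact absurd ⟨h⟩ hne
      | succ i => exact he i

/-- Let `I` be a locally finite `L'`-structure (every finitely generated substructure is
finite) whose age has the embedding Ramsey property, `M` an `L`-structure, and `(a_i)_{i∈I}` a
family of `k`-tuples from `M`.  Then for every finite substructure `B` of `I`, every finite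
family `A_1, …, A_m` of substructures of `B`, and all `L`-formulas `φ_j` with free variables
indexed by `A_j × Fin k`, there is an embedding `e : B ↪ I` such that for every `j` and any
two embeddings `h, h' : A_j ↪ B` the tuples `(a_{e(h(g))})_{g∈A_j}` and
`(a_{e(h'(g))})_{g∈A_j}` satisfy `φ_j` in `M` in the same way. -/
theorem statement10 (L' : FirstOrder.Language.{u₁, v₁}) (L : FirstOrder.Language.{u₂, v₂})
    (I : Type w) [L'.Structure I]
    (hlf : ∀ S : L'.Substructure I, S.FG → (S : Set I).Finite)
    (herp : HasERP L' (L'.age I))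
    (M : Type w₂) [L.Structure M] (k : ℕ) (a : I → Fin k → M)
    (B : L'.Substructure I) (hBfin : (B : Set I).Finite)
    (m : ℕ) (A : Fin m → L'.Substructure I) (hAB : ∀ j, A j ≤ B)
    (φ : (j : Fin m) → L.Formula (↥(A j) × Fin k)) :
    ∃ e : ↥B ↪[L'] I, ∀ (j : Fin m) (h h' : ↥(A j) ↪[L'] ↥B),
      ((φ j).Realize (fun p => a (e (h p.1)) p.2) ↔
        (φ j).Realize (fun p => a (e (h' p.1)) p.2)) := by
  have hBage : (CategoryTheory.Bundled.of ↥B : CategoryTheory.Bundled L'.Structure) ∈ L'.age I := by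
    refine ⟨?_, ⟨B.subtype⟩⟩
    haveI : Finite ((CategoryTheory.Bundled.of ↥B : CategoryTheory.Bundled L'.Structure) : Type w) := hBfin.to_subtype
    exact Language.Structure.FG.of_finite
  have hAage : ∀ j, (CategoryTheory.Bundled.of ↥(A j) : CategoryTheory.Bundled L'.Structure)
      ∈ L'.age I := by
    intro j
    refine ⟨?_, ⟨(A j).subtype⟩⟩
    haveI : Finite ((CategoryTheory.Bundled.of ↥(A j) : CategoryTheory.Bundled L'.Structure) : Type w) := ((hBfin.subset (hAB j)).to_subtype)
    exact Language.Structure.FG.of_finite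
  exact key_erp_lemma L' L I herp M k a m
    (fun j => CategoryTheory.Bundled.of ↥(A j)) hAage φ
    (CategoryTheory.Bundled.of ↥B) hBage
end

section
/- Let L′ be a first-order language and let I be an infinite locally finite L′-structure. Suppose that for every first-order language L, every L-structure M, and every family (a_i)_{i∈I} of elements of M, there exist an L-structure N and a family (b_i)_{i∈I} of elements of N that is I-indiscernible and locally based on (a_i)_{i∈I}. Then age(I) has the embedding Ramsey property. -/
/-!
Fix `A ≤ B` in the age of `I`, a number of colors `r`, and a coloring `c` of the copies of `A`
in `I`. Expand `I` by one relation `R k` per color, holding of (an enumeration of) each copy of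
`A` of color `k`, and take an `I`-indiscernible family `b` locally based on this expansion. Fix a
copy `g` of `B` in `I`. Local basedness, applied to the finitely many formulas `R k` evaluated on
the copies of `A` inside `g`, yields a copy `f` of `B` in `I` whose copies of `A` carry the colors
read off from `b` along `g`; by indiscernibility these do not depend on the copy of `A`, so `f`
is monochromatic. Thus `I → (B)^A_r`, and compactness of `Fin r ^ Emb(A, I)` moves this to a
finitely generated substructure of `I`. Local finiteness is what makes `A` and `B` finite.
-/

open FirstOrder CategoryTheory

universe u₁ v₁ u₂ v₂ w w₂

/-- The finite tuples `i` and `j` from `I` have the same quantifier-free type. -/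
def SameQftp (L' : FirstOrder.Language.{u₁, v₁}) (I : Type w) [L'.Structure I] {n : ℕ}
    (i j : Fin n → I) : Prop :=
  ∀ φ : L'.Formula (Fin n), FirstOrder.Language.BoundedFormula.IsQF φ →
    (φ.Realize i ↔ φ.Realize j)

/-- The family `(b_i)_{i∈I}` of elements of `N` is `I`-indiscernible: finite tuples of indices
with the same quantifier-free type in `I` give tuples satisfying the same `L`-formulas. -/
def IsIndiscernible (L' : FirstOrder.Language.{u₁, v₁})
    (L : FirstOrder.Language.{max u₁ u₂, max v₁ v₂})
    (I : Type w) [L'.Structure I] (N : Type*) [L.Structure N] (b : I → N) : Prop :=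
  ∀ (n : ℕ) (i j : Fin n → I), SameQftp L' I i j →
    ∀ ψ : L.Formula (Fin n), (ψ.Realize (b ∘ i) ↔ ψ.Realize (b ∘ j))

/-- The family `(b_i)_{i∈I}` of elements of `N` is locally based on the family `(a_i)_{i∈I}`
of elements of `M`: for every finite set `Δ` of `L`-formulas and every finite tuple `j` from
`I` there is a tuple `i` from `I` with the same quantifier-free type such that each `φ ∈ Δ`
holds of `(b_j)` in `N` iff it holds of `(a_i)` in `M`. -/
def LocallyBasedOn (L' : FirstOrder.Language.{u₁, v₁})
    (L : FirstOrder.Language.{max u₁ u₂, max v₁ v₂})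
    (I : Type w) [L'.Structure I] (M : Type*) [L.Structure M] (N : Type*) [L.Structure N]
    (a : I → M) (b : I → N) : Prop :=
  ∀ (n : ℕ) (Δ : Set (L.Formula (Fin n))), Δ.Finite → ∀ j : Fin n → I,
    ∃ i : Fin n → I, SameQftp L' I i j ∧
      ∀ φ ∈ Δ, (φ.Realize (b ∘ j) ↔ φ.Realize (a ∘ i))

open FirstOrder.Language

namespace FirstOrder.Language

variable {L : Language} {M N : Type*} [L.Structure M] [L.Structure N]

theorem BoundedFormula.IsQF.realize_formula_embedding {α : Type*} {φ : L.Formula α}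
    (hφ : φ.IsQF) (f : M ↪[L] N) {v : α → M} : φ.Realize (f ∘ v) ↔ φ.Realize v := by
  rw [Formula.Realize, Formula.Realize, ← hφ.realize_embedding f (v := v)]
  exact iff_of_eq (congrArg _ (Subsingleton.elim _ _))

theorem exists_embedding_of_realize_iff (v : M → N)
    (hv : ∀ φ : L.Formula M, φ.IsQF → (φ.Realize v ↔ φ.Realize (id : M → M))) :
    ∃ f : M ↪[L] N, ⇑f = v := by
  have hatom := fun φ hφ => hv φ (BoundedFormula.IsAtomic.isQF hφ)
  refine ⟨⟨⟨v, fun x y hxy => ?_⟩, fun F x => ?_, fun R x => ?_⟩, rfl⟩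
  · simpa using (hatom (Term.equal (var x) (var y)) (.equal _ _)).1 hxy
  · simpa [Function.comp_def] using
      ((hatom (Term.equal (func F (var ∘ x)) (var (Structure.funMap F x))) (.equal _ _)).2 rfl).symm
  · simpa [Function.comp_def] using hatom (R.formula (var ∘ x)) (.rel _ _)

end FirstOrder.Language

section SameQftp

variable {L' : FirstOrder.Language.{u₁, v₁}} {I : Type w} [L'.Structure I]

theorem sameQftp_comp_embedding {A : Type*} [L'.Structure A] {n : ℕ} (x : Fin n → A)
    (e e' : A ↪[L'] I) : SameQftp L' I (e ∘ x) (e' ∘ x) := fun _ hφ =>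
  (hφ.realize_formula_embedding e).trans (hφ.realize_formula_embedding e').symm

theorem SameQftp.exists_embedding {B : Type*} [L'.Structure B] {m : ℕ} {i : Fin m → I}
    {eB : Fin m ≃ B} {g : B ↪[L'] I} (h : SameQftp L' I i (g ∘ eB)) :
    ∃ f : B ↪[L'] I, ⇑f ∘ eB = i := by
  obtain ⟨f, hf⟩ := exists_embedding_of_realize_iff (i ∘ eB.symm) fun φ hφ => by
    have := h (φ.relabel eB.symm) (hφ.relabel _)
    rw [Formula.realize_relabel, Formula.realize_relabel] at this
    rw [this, ← hφ.realize_formula_embedding g, Function.comp_assoc, eB.self_comp_symm]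
  exact ⟨f, by rw [hf, Function.comp_assoc, eB.symm_comp_self, Function.comp_id]⟩

end SameQftp

section Monochromatic

variable {L : FirstOrder.Language.{u₁, v₁}} {A B C : Type*} [L.Structure A] [L.Structure B]
  [L.Structure C] {κ : Type*}

def IsMonochromatic (c : (A ↪[L] C) → κ) (f : B ↪[L] C) : Prop :=
  ∀ e e' : A ↪[L] B, c (f.comp e) = c (f.comp e')

theorem isOpen_setOf_isMonochromatic [TopologicalSpace κ] [DiscreteTopology κ] [Finite A]
    [Finite B] (f : B ↪[L] C) : IsOpen {c : (A ↪[L] C) → κ | IsMonochromatic c f} := by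
  have : Finite (A ↪[L] B) := Finite.of_injective _ DFunLike.coe_injective
  simp only [IsMonochromatic, Set.ofPred_forall]
  refine isOpen_iInter_of_finite fun e => isOpen_iInter_of_finite fun e' => ?_
  have hcont : Continuous fun c : (A ↪[L] C) → κ => (c (f.comp e), c (f.comp e')) := by fun_prop
  exact hcont.isOpen_preimage _ (isOpen_discrete {p : κ × κ | p.1 = p.2})

theorem isMonochromatic_comp_iff {S : Type*} [L.Structure S] (g : S ↪[L] C) (f : B ↪[L] S)
    {c : (A ↪[L] C) → κ} : IsMonochromatic c (g.comp f) ↔ IsMonochromatic (c ∘ g.comp) f := by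
  simp only [IsMonochromatic, Function.comp_apply, Embedding.comp_assoc]

end Monochromatic

theorem arrowsERP_zero {L : FirstOrder.Language.{u₁, v₁}} (A B C : Bundled.{w} L.Structure)
    (f : A ↪[L] C) : ArrowsERP L A B C 0 :=
  fun χ => (χ f).elim0

section Compactness

variable {L' : FirstOrder.Language.{u₁, v₁}} {I : Type w} [L'.Structure I]
  {A B : Bundled.{w} L'.Structure} {r : ℕ}

theorem exists_forall_mem_not_isMonochromatic [Finite B] (hr : 0 < r)
    (hbad : ∀ C ∈ L'.age I, ¬ ArrowsERP L' A B C r) (u : Finset (B ↪[L'] I)) :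
    ∃ c : (A ↪[L'] I) → Fin r, ∀ f ∈ u, ¬ IsMonochromatic c f := by
  classical
  set S := Substructure.closure L' (⋃ f ∈ u, Set.range f)
  have hS : ∀ f ∈ u, ∀ x, f x ∈ S := fun f hf x =>
    Substructure.subset_closure (Set.mem_biUnion hf (Set.mem_range_self x))
  have hSage : (⟨S, inferInstance⟩ : Bundled L'.Structure) ∈ L'.age I :=
    age.fg_substructure (Substructure.fg_closure
      (u.finite_toSet.biUnion fun f _ => Set.finite_range f))
  obtain ⟨χ, hχ⟩ : ∃ χ : (A ↪[L'] S) → Fin r, ∀ f : B ↪[L'] S, ¬ IsMonochromatic χ f := by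
    simpa [ArrowsERP, IsMonochromatic] using hbad _ hSage
  refine ⟨Function.extend S.subtype.comp χ fun _ => ⟨0, hr⟩, fun f hf hmono => ?_⟩
  rw [← Embedding.subtype_comp_codRestrict f S (hS f hf), isMonochromatic_comp_iff,
    Function.extend_comp S.subtype.comp_injective] at hmono
  exact hχ _ hmono

theorem exists_mem_age_arrowsERP [Finite A] [Finite B] (hr : 0 < r)
    (hI : ArrowsERP L' A B (Bundled.of I) r) : ∃ C ∈ L'.age I, ArrowsERP L' A B C r := by
  by_contra! hbad
  obtain ⟨c, -, hc⟩ := isCompact_univ.inter_iInter_nonempty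
    (fun f : B ↪[L'] I => {c : (A ↪[L'] I) → Fin r | ¬ IsMonochromatic c f})
    (fun f => (isOpen_setOf_isMonochromatic f).isClosed_compl) fun u => by
      simpa using exists_forall_mem_not_isMonochromatic hr hbad u
  obtain ⟨f, hf⟩ := hI c
  exact Set.mem_iInter.1 hc f hf

end Compactness

theorem finite_of_mem_age {L' : FirstOrder.Language.{u₁, v₁}} {I : Type w} [L'.Structure I]
    (hlf : ∀ S : L'.Substructure I, S.FG → (S : Set I).Finite)
    {C : Bundled.{w} L'.Structure} (hC : C ∈ L'.age I) : Finite C := by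
  obtain ⟨hfg, ⟨g⟩⟩ := hC
  have := (hlf _ (hfg.range g.toHom)).to_subtype
  rw [Hom.range_coe, Embedding.coe_toHom] at this
  exact Finite.of_injective_finite_range g.injective

/-- One `n`-ary relation symbol for each color in `κ`. -/
def colorLanguage (κ : Type) (n : ℕ) : FirstOrder.Language.{u₁, v₁} where
  Functions _ := PEmpty
  Relations m := ULift κ × PLift (m = n)

namespace colorLanguage

variable {κ : Type} {n : ℕ}

def rel (k : κ) : (colorLanguage.{u₁, v₁} κ n).Relations n := (⟨k⟩, ⟨rfl⟩)

abbrev structureOf {M : Type*} (P : κ → Set (Fin n → M)) :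
    (colorLanguage.{u₁, v₁} κ n).Structure M where
  funMap F := PEmpty.elim F
  RelMap R x := x ∘ Fin.cast R.2.down.symm ∈ P R.1.down

end colorLanguage

theorem exists_isMonochromatic_of_indiscernibles {L' : FirstOrder.Language.{u₁, v₁}} {I : Type w}
    [L'.Structure I] {A B : Type*} [L'.Structure A] [L'.Structure B]
    {κ : Type} [Finite κ] (c : (A ↪[L'] I) → κ) {n m : ℕ} (eA : Fin n ≃ A) (eB : Fin m ≃ B)
    (g : B ↪[L'] I)
    (hmp : ∀ (L : FirstOrder.Language.{max u₁ u₂, max v₁ v₂}) (M : Type (max w w₂))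
      [L.Structure M] (a : I → M),
      ∃ (N : Type (max u₁ u₂ v₁ v₂ w w₂)) (iN : L.Structure N),
        letI := iN
        ∃ b : I → N, IsIndiscernible L' L I N b ∧ LocallyBasedOn L' L I M N a b) :
    ∃ f : B ↪[L'] I, IsMonochromatic c f := by
  have : Finite A := .of_equiv _ eA
  have : Finite B := .of_equiv _ eB
  have : Finite (A ↪[L'] B) := Finite.of_injective _ DFunLike.coe_injective
  -- `R k` holds of the enumerations `ε ∘ eA` of the copies `ε` of `A` of color `k`.
  let _ := colorLanguage.structureOf.{max u₁ u₂, max v₁ v₂} fun k =>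
    {x : Fin n → ULift.{w₂} I | ∃ ε, c ε = k ∧ ⇑ε ∘ eA = ULift.down ∘ x}
  obtain ⟨N, _, b, hind, hbase⟩ := hmp (colorLanguage κ n) (ULift.{w₂} I) ULift.up
  have hcomp (h : B ↪[L'] I) (e : A ↪[L'] B) : (h ∘ eB) ∘ (eB.symm ∘ e ∘ eA) = h.comp e ∘ eA := by
    ext; simp
  let φ (k : κ) (e : A ↪[L'] B) : (colorLanguage κ n).Formula (Fin m) :=
    (colorLanguage.rel k).formula (var ∘ eB.symm ∘ e ∘ eA)
  obtain ⟨i, hi, hφ⟩ := hbase m (Set.range (Function.uncurry φ)) (Set.finite_range _) (g ∘ eB)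
  obtain ⟨f, rfl⟩ := hi.exists_embedding
  have hcolor (k : κ) (e : A ↪[L'] B) : (φ k e).Realize (b ∘ g ∘ eB) ↔ c (f.comp e) = k := by
    refine (hφ _ ⟨(k, e), rfl⟩).trans ?_
    change (∃ ε, c ε = k ∧ ⇑ε ∘ eA = (f ∘ eB) ∘ (eB.symm ∘ e ∘ eA)) ↔ _
    rw [hcomp]
    refine ⟨fun ⟨ε, hε, hεf⟩ => ?_, fun hf => ⟨_, hf, rfl⟩⟩
    rwa [← DFunLike.coe_injective (eA.surjective.injective_comp_right hεf)]
  have hsame (k : κ) (e e' : A ↪[L'] B) :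
      (φ k e).Realize (b ∘ g ∘ eB) ↔ (φ k e').Realize (b ∘ g ∘ eB) := by
    have := hind n _ _ (sameQftp_comp_embedding eA (g.comp e) (g.comp e'))
      ((colorLanguage.rel k).formula var)
    rwa [← hcomp, ← hcomp] at this
  exact ⟨f, fun e e' => (hcolor _ e).1 ((hsame _ e e').2 ((hcolor _ e').2 rfl))⟩

theorem statement12_general (L' : FirstOrder.Language.{u₁, v₁}) (I : Type w) [L'.Structure I]
    (hlf : ∀ S : L'.Substructure I, S.FG → (S : Set I).Finite)
    (hmp : ∀ (L : FirstOrder.Language.{max u₁ u₂, max v₁ v₂}) (M : Type (max w w₂))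
      [L.Structure M] (a : I → M),
      ∃ (N : Type (max u₁ u₂ v₁ v₂ w w₂)) (iN : L.Structure N),
        letI := iN
        ∃ b : I → N, IsIndiscernible L' L I N b ∧ LocallyBasedOn L' L I M N a b) :
    HasERP L' (L'.age I) := by
  intro A hA B hB _ r
  have := finite_of_mem_age hlf hA
  have := finite_of_mem_age hlf hB
  rcases r.eq_zero_or_pos with rfl | hr
  · exact ⟨A, hA, arrowsERP_zero A B A (Embedding.refl L' A)⟩
  refine exists_mem_age_arrowsERP hr fun c => ?_
  obtain ⟨n, ⟨eA⟩⟩ := Finite.exists_equiv_fin A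
  obtain ⟨m, ⟨eB⟩⟩ := Finite.exists_equiv_fin B
  exact exists_isMonochromatic_of_indiscernibles c eA.symm eB.symm hB.2.some hmp

/-- If `I` is an infinite locally finite `L'`-structure such that for every language `L`,
every `L`-structure `M`, and every family `(a_i)_{i∈I}` of elements of `M` there are an
`L`-structure `N` and an `I`-indiscernible family `(b_i)_{i∈I}` of elements of `N` locally
based on `(a_i)_{i∈I}`, then the age of `I` has the embedding Ramsey property. -/
theorem statement12 (L' : FirstOrder.Language.{u₁, v₁}) (I : Type w) [L'.Structure I]
    [Infinite I] (hlf : ∀ S : L'.Substructure I, S.FG → (S : Set I).Finite)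
    (hmp : ∀ (L : FirstOrder.Language.{max u₁ u₂, max v₁ v₂}) (M : Type (max w w₂))
      [L.Structure M] (a : I → M),
      ∃ (N : Type (max u₁ u₂ v₁ v₂ w w₂)) (iN : L.Structure N),
        letI := iN
        ∃ b : I → N, IsIndiscernible L' L I N b ∧ LocallyBasedOn L' L I M N a b) :
    HasERP L' (L'.age I) :=
  statement12_general L' I hlf hmp
end

section
/- Let (G,X) be a G-flow, M a minimal left ideal of the Ellis semigroup E(X), u ∈ M an idempotent, and A ⊆ uM. Then the τ-closure cl_τ(A) = uM ∩ (u ∘ A) equals the set of all p ∈ uM such that the pair (u, p) lies in the closure, in (X^X) × (X^X) with the product topology, of the set {(η, η ∘ a) : η ∈ M, a ∈ A}. -/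
/-- The Ellis semigroup of the flow `(G, X)`: the pointwise closure in `X → X` of the set of
translation maps `x ↦ g • x`. -/
def ellisSemigroup (G X : Type*) [SMul G X] [TopologicalSpace X] : Set (X → X) :=
  closure (Set.range fun g : G => fun x : X => g • x)

/-- `M` is a minimal left ideal of the Ellis semigroup of `(G, X)`: a minimal element of the
family of nonempty closed subsets of the Ellis semigroup closed under left composition with
arbitrary elements of the Ellis semigroup. -/
def IsMinimalLeftIdeal (G X : Type*) [SMul G X] [TopologicalSpace X]
    (M : Set (X → X)) : Prop :=
  (M.Nonempty ∧ M ⊆ ellisSemigroup G X ∧ IsClosed M ∧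
    ∀ η ∈ ellisSemigroup G X, ∀ m ∈ M, η ∘ m ∈ M) ∧
  ∀ M' : Set (X → X),
    (M'.Nonempty ∧ M' ⊆ ellisSemigroup G X ∧ IsClosed M' ∧
      ∀ η ∈ ellisSemigroup G X, ∀ m ∈ M', η ∘ m ∈ M') → M' ⊆ M → M' = M

/-- For `a : X → X` and `B ⊆ X → X`, the set `a ∘ B` of all limits of nets `(π_{g_i} ∘ b_i)`
with `b_i ∈ B` and `lim π_{g_i} = a`: all `p` such that `(a, p)` lies in the closure of
`{(π_g, π_g ∘ b) : g ∈ G, b ∈ B}` in `(X → X) × (X → X)`. -/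
def circOp (G : Type*) {X : Type*} [SMul G X] [TopologicalSpace X] (a : X → X)
    (B : Set (X → X)) : Set (X → X) :=
  {p | (a, p) ∈ closure {q : (X → X) × (X → X) |
    ∃ (g : G), ∃ b ∈ B, q = (fun x : X => g • x, (fun x : X => g • x) ∘ b)}}

/-!
Both sets are closures of pairs `(η, η ∘ a)` with `a ∈ A`, taken over `η = π_g` in `u ∘ A` and
over `η ∈ M` on the right. Since `M` lies in the closure of the translations, every pair with
`η ∈ M` is a limit of pairs with `η = π_g`. Conversely, as `u ∘ a = a` for `a ∈ uM`, precomposing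
with `u` turns `(π_g, π_g ∘ a)` into `(π_g ∘ u, π_g ∘ a)`, where `π_g ∘ u ∈ M`, and sends the limit
`(u, p)` to `(u ∘ u, p) = (u, p)`.
-/

open Set

section CompPairs

variable {X Y Z : Type*}

def compPairs (S : Set (Y → Z)) (B : Set (X → Y)) : Set ((Y → Z) × (X → Z)) :=
  {q | ∃ η ∈ S, ∃ b ∈ B, q = (η, η ∘ b)}

theorem compPairs_mono {S S' : Set (Y → Z)} (hS : S ⊆ S') (B : Set (X → Y)) :
    compPairs S B ⊆ compPairs S' B := by
  rintro _ ⟨η, hη, b, hb, rfl⟩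
  exact ⟨η, hS hη, b, hb, rfl⟩

theorem compPairs_closure_subset [TopologicalSpace Z] (S : Set (Y → Z)) (B : Set (X → Y)) :
    compPairs (closure S) B ⊆ closure (compPairs S B) := by
  rintro _ ⟨η, hη, b, hb, rfl⟩
  exact map_mem_closure (f := fun f : Y → Z => (f, f ∘ b))
    (continuous_id.prodMk (Pi.continuous_precomp b)) hη fun f hf => ⟨f, hf, b, hb, rfl⟩

theorem mapsTo_precomp_fst_compPairs {u : Y → Y} {B : Set (X → Y)} (hB : ∀ b ∈ B, u ∘ b = b)
    (S : Set (Y → Z)) :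
    MapsTo (Prod.map (· ∘ u) id) (compPairs S B) (compPairs ((· ∘ u) '' S) B) := by
  rintro _ ⟨η, hη, b, hb, rfl⟩
  refine ⟨η ∘ u, mem_image_of_mem _ hη, b, hb, ?_⟩
  rw [Prod.map_apply, id, Function.comp_assoc, hB b hb]

end CompPairs

theorem comp_eq_self_of_mem_image_comp {X : Type*} {u b : X → X} {S : Set (X → X)}
    (hu : u ∘ u = u) (hb : b ∈ (fun m => u ∘ m) '' S) : u ∘ b = b := by
  obtain ⟨m, -, rfl⟩ := hb
  rw [← Function.comp_assoc, hu]

section Ellis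

variable {G X : Type*} [SMul G X] [TopologicalSpace X]

theorem circOp_eq (a : X → X) (B : Set (X → X)) :
    circOp G a B =
      {p | (a, p) ∈ closure (compPairs (range fun g : G => fun x : X => g • x) B)} := by
  simp only [circOp, compPairs, exists_range_iff]

theorem closure_compPairs_subset_of_subset_ellisSemigroup {S : Set (X → X)}
    (hS : S ⊆ ellisSemigroup G X) (B : Set (X → X)) :
    closure (compPairs S B) ⊆
      closure (compPairs (range fun g : G => fun x : X => g • x) B) :=
  closure_minimal ((compPairs_mono hS B).trans (compPairs_closure_subset _ B)) isClosed_closure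

theorem circOp_subset_closure_compPairs {M : Set (X → X)} {u : X → X}
    (hM : ∀ g : G, (fun x : X => g • x) ∘ u ∈ M) (hu : u ∘ u = u) {B : Set (X → X)}
    (hB : ∀ b ∈ B, u ∘ b = b) :
    circOp G u B ⊆ {p | (u, p) ∈ closure (compPairs M B)} := by
  intro p hp
  rw [circOp_eq] at hp
  have hlim := map_mem_closure ((Pi.continuous_precomp u).prodMap continuous_id) hp
    (mapsTo_precomp_fst_compPairs hB _)
  simp only [Prod.map_apply, id, hu] at hlim
  refine closure_mono (compPairs_mono ?_ B) hlim
  rintro _ ⟨_, ⟨g, rfl⟩, rfl⟩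
  exact hM g

end Ellis

theorem statement15_general {G X : Type*} [Group G] [TopologicalSpace X]
    [MulAction G X]
    (M : Set (X → X)) (hM : IsMinimalLeftIdeal G X M)
    (u : X → X) (huM : u ∈ M) (hu : u ∘ u = u)
    (A : Set (X → X)) (hA : A ⊆ (fun m => u ∘ m) '' M) :
    ((fun m => u ∘ m) '' M) ∩ circOp G u A =
      {p | p ∈ (fun m => u ∘ m) '' M ∧
        (u, p) ∈ closure {q : (X → X) × (X → X) | ∃ η ∈ M, ∃ a ∈ A, q = (η, η ∘ a)}} := by
  obtain ⟨⟨-, hM_sub, -, hM_ideal⟩, -⟩ := hM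
  have hA_fixed : ∀ a ∈ A, u ∘ a = a := fun a ha => comp_eq_self_of_mem_image_comp hu (hA ha)
  ext p
  refine and_congr_right fun _ => ⟨fun hp => ?_, fun hp => ?_⟩
  · exact circOp_subset_closure_compPairs
      (fun g => hM_ideal _ (subset_closure ⟨g, rfl⟩) u huM) hu hA_fixed hp
  · rw [circOp_eq]
    exact closure_compPairs_subset_of_subset_ellisSemigroup hM_sub A hp

/-- Let `(G,X)` be a flow, `M` a minimal left ideal of the Ellis semigroup `E(X)`, `u ∈ M` an
idempotent and `A ⊆ uM`.  Then the `τ`-closure `cl_τ(A) = uM ∩ (u ∘ A)` equals the set of all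
`p ∈ uM` such that `(u, p)` lies in the closure of `{(η, η ∘ a) : η ∈ M, a ∈ A}` in
`(X → X) × (X → X)`. -/
theorem statement15 {G X : Type*} [Group G] [TopologicalSpace X] [CompactSpace X] [T2Space X]
    [MulAction G X] (hc : ∀ g : G, Continuous fun x : X => g • x)
    (M : Set (X → X)) (hM : IsMinimalLeftIdeal G X M)
    (u : X → X) (huM : u ∈ M) (hu : u ∘ u = u)
    (A : Set (X → X)) (hA : A ⊆ (fun m => u ∘ m) '' M) :
    ((fun m => u ∘ m) '' M) ∩ circOp G u A =
      {p | p ∈ (fun m => u ∘ m) '' M ∧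
        (u, p) ∈ closure {q : (X → X) × (X → X) | ∃ η ∈ M, ∃ a ∈ A, q = (η, η ∘ a)}} :=
  statement15_general M hM u huM hu A hA
end
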